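/- arXiv:2311.00912 — 7 statements merged into one kernel-verified Lean document; each statement's English description precedes it below -/
import Mathlib

section
/- Let K ⊂ ℝⁿ be a compact, convex, centrally symmetric (K = −K) body, and let g : K → ℝ be convex, continuous, nonnegative, with g(0) = 0. Then the second modulus of smoothness satisfies ω₂(g;K) ≥ max_{x∈K} g(x). Consequently, the error of best uniform approximation of g by affine functions satisfies E₁(g;K) ≤ (1/2)·ω₂(g;K). -/
open MvPolynomial

noncomputable def uDist {n : ℕ} (f g : (Fin n → ℝ) → ℝ) (K : Set (Fin n → ℝ)) : ℝ :=
  sSup ((fun x => |f x - g x|) '' K)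

noncomputable def polyErr {n : ℕ} (m : ℕ) (f : (Fin n → ℝ) → ℝ) (K : Set (Fin n → ℝ)) : ℝ :=
  sInf {e | ∃ P : MvPolynomial (Fin n) ℝ, P.totalDegree ≤ m ∧
    e = uDist f (fun x => eval x P) K}

noncomputable def smod {n : ℕ} (m : ℕ) (f : (Fin n → ℝ) → ℝ) (K : Set (Fin n → ℝ)) : ℝ :=
  sSup {v | ∃ x h : Fin n → ℝ, (∀ j ≤ m, x + (j : ℝ) • h ∈ K) ∧
    v = |∑ j ∈ Finset.range (m + 1), (-1 : ℝ) ^ j * (m.choose j) * f (x + (j : ℝ) • h)|}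


/-!
For every `x ∈ K`, the progression `x, 0, -x` lies in the convex symmetric body `K`, and its
second difference is `g x + g (-x) ≥ g x` because `g ≥ 0` and `g 0 = 0`; hence `sup g ≤ ω₂`.
The constant `sup g / 2` then approximates `0 ≤ g ≤ sup g` within `sup g / 2 ≤ ω₂ / 2`.
-/

lemma Convex.zero_mem_of_neg_mem {E : Type*} [AddCommGroup E] [Module ℝ E] {K : Set E}
    (hK : Convex ℝ K) (hsym : ∀ x ∈ K, -x ∈ K) (hne : K.Nonempty) : (0 : E) ∈ K := by
  obtain ⟨x, hx⟩ := hne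
  have hmid := hK hx (hsym x hx) (by norm_num : (0 : ℝ) ≤ 1 / 2) (by norm_num : (0 : ℝ) ≤ 1 / 2)
    (by norm_num)
  rwa [smul_neg, add_neg_cancel] at hmid

section SecondModulus

variable {n : ℕ} (f : (Fin n → ℝ) → ℝ) (K : Set (Fin n → ℝ))

lemma smod_two_eq :
    smod 2 f K = sSup {v | ∃ x h : Fin n → ℝ, (x ∈ K ∧ x + h ∈ K ∧ x + (2 : ℝ) • h ∈ K) ∧
      v = |f x - 2 * f (x + h) + f (x + (2 : ℝ) • h)|} := by
  unfold smod
  congr 1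
  ext v
  have hprog : ∀ x h : Fin n → ℝ, (∀ j : ℕ, j ≤ 2 → x + (j : ℝ) • h ∈ K) ↔
      (x ∈ K ∧ x + h ∈ K ∧ x + (2 : ℝ) • h ∈ K) := by
    intro x h
    constructor
    · intro hj
      refine ⟨by simpa using hj 0 (by norm_num), by simpa using hj 1 (by norm_num),
        by simpa using hj 2 le_rfl⟩
    · rintro ⟨h0, h1, h2⟩ j hj
      interval_cases j <;> simpa
  simp only [hprog, Finset.sum_range_succ, Finset.sum_range_zero]
  norm_num [Nat.choose]
  ring_nf

variable {f K}

lemma abs_secondDiff_le_smod_two {M : ℝ} (hM : ∀ y ∈ K, |f y| ≤ M) {x h : Fin n → ℝ}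
    (h0 : x ∈ K) (h1 : x + h ∈ K) (h2 : x + (2 : ℝ) • h ∈ K) :
    |f x - 2 * f (x + h) + f (x + (2 : ℝ) • h)| ≤ smod 2 f K := by
  rw [smod_two_eq]
  refine le_csSup ⟨4 * M, ?_⟩ ⟨x, h, ⟨h0, h1, h2⟩, rfl⟩
  rintro v ⟨y, k, ⟨k0, k1, k2⟩, rfl⟩
  have b0 := abs_le.mp (hM _ k0)
  have b1 := abs_le.mp (hM _ k1)
  have b2 := abs_le.mp (hM _ k2)
  rw [abs_le]
  constructor <;> linarith [b0.1, b0.2, b1.1, b1.2, b2.1, b2.2]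

lemma le_smod_two_of_nonneg (hsym : ∀ x ∈ K, -x ∈ K) (h0K : (0 : Fin n → ℝ) ∈ K) {M : ℝ}
    (hM : ∀ y ∈ K, |f y| ≤ M) (hnonneg : ∀ x ∈ K, 0 ≤ f x) (hzero : f 0 = 0)
    {x : Fin n → ℝ} (hx : x ∈ K) : f x ≤ smod 2 f K := by
  have hmid : x + -x = 0 := add_neg_cancel x
  have hend : x + (2 : ℝ) • -x = -x := by rw [smul_neg, two_smul]; abel
  have hdiff := abs_secondDiff_le_smod_two hM hx (by rw [hmid]; exact h0K)
    (by rw [hend]; exact hsym x hx)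
  rw [hmid, hend, hzero, mul_zero, sub_zero,
    abs_of_nonneg (add_nonneg (hnonneg x hx) (hnonneg _ (hsym x hx)))] at hdiff
  linarith [hnonneg _ (hsym x hx)]

end SecondModulus

section BestApproximation

variable {n : ℕ} {f : (Fin n → ℝ) → ℝ} {K : Set (Fin n → ℝ)}

lemma polyErr_le_uDist {m : ℕ} {P : MvPolynomial (Fin n) ℝ} (hP : P.totalDegree ≤ m) :
    polyErr m f K ≤ uDist f (fun x => eval x P) K := by
  refine csInf_le ⟨0, ?_⟩ ⟨P, hP, rfl⟩
  rintro e ⟨Q, -, rfl⟩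
  exact Real.sSup_nonneg fun _ ⟨_, _, hv⟩ => hv ▸ abs_nonneg _

lemma polyErr_one_le_half_of_mem_Icc {M : ℝ} (hM : 0 ≤ M) (hf : ∀ x ∈ K, f x ∈ Set.Icc 0 M) :
    polyErr 1 f K ≤ M / 2 := by
  refine (polyErr_le_uDist (P := C (M / 2)) (by simp)).trans ?_
  refine Real.sSup_le ?_ (by linarith)
  rintro v ⟨x, hx, rfl⟩
  obtain ⟨hlo, hhi⟩ := hf x hx
  change |f x - eval x (C (M / 2))| ≤ M / 2
  rw [eval_C, abs_le]
  constructor <;> linarith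

end BestApproximation

theorem stmt_2_general {n : ℕ} (K : Set (Fin n → ℝ)) (hKc : IsCompact K) (hKconv : Convex ℝ K)
    (hKint : (interior K).Nonempty) (hsym : ∀ x ∈ K, -x ∈ K)
    (g : (Fin n → ℝ) → ℝ) (hcont : ContinuousOn g K)
    (hnonneg : ∀ x ∈ K, 0 ≤ g x) (hzero : g 0 = 0) :
    sSup (g '' K) ≤ smod 2 g K ∧ polyErr 1 g K ≤ (1 / 2) * smod 2 g K := by
  have h0K : (0 : Fin n → ℝ) ∈ K := hKconv.zero_mem_of_neg_mem hsym (hKint.mono interior_subset)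
  have hgM : ∀ x ∈ K, g x ≤ sSup (g '' K) := fun x hx =>
    le_csSup (hKc.bddAbove_image hcont) ⟨x, hx, rfl⟩
  have habs : ∀ x ∈ K, |g x| ≤ sSup (g '' K) := fun x hx => by
    rw [abs_of_nonneg (hnonneg x hx)]; exact hgM x hx
  have hsup : sSup (g '' K) ≤ smod 2 g K :=
    csSup_le ⟨g 0, 0, h0K, rfl⟩ fun _ ⟨x, hx, hv⟩ =>
      hv ▸ le_smod_two_of_nonneg hsym h0K habs hnonneg hzero hx
  refine ⟨hsup, ?_⟩
  calc polyErr 1 g K ≤ sSup (g '' K) / 2 :=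
        polyErr_one_le_half_of_mem_Icc (hzero ▸ hgM 0 h0K) fun x hx => ⟨hnonneg x hx, hgM x hx⟩
    _ ≤ (1 / 2) * smod 2 g K := by linarith

theorem stmt_2 {n : ℕ} (K : Set (Fin n → ℝ)) (hKc : IsCompact K) (hKconv : Convex ℝ K)
    (hKint : (interior K).Nonempty) (hsym : ∀ x ∈ K, -x ∈ K)
    (g : (Fin n → ℝ) → ℝ) (hconv : ConvexOn ℝ K g) (hcont : ContinuousOn g K)
    (hnonneg : ∀ x ∈ K, 0 ≤ g x) (hzero : g 0 = 0) :
    sSup (g '' K) ≤ smod 2 g K ∧ polyErr 1 g K ≤ (1 / 2) * smod 2 g K :=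
  stmt_2_general K hKc hKconv hKint hsym g hcont hnonneg hzero
end

section
/- Let K ⊂ ℝⁿ be a compact, convex, centrally symmetric body and f : K → ℝ convex and continuous. Then there exists an affine function L with max_{x∈K}|f(x) − L(x)| ≤ (1/2)·ω₂(f;K), i.e., E₁(f;K) ≤ (1/2)·ω₂(f;K). -/
open MvPolynomial

open Filter Set Topology

/-- Supporting affine minorant at an interior point 0. -/
lemma support_aux {n : ℕ} (K : Set (Fin n → ℝ)) (hKconv : Convex ℝ K)
    (h0 : (0 : Fin n → ℝ) ∈ interior K) (f : (Fin n → ℝ) → ℝ)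
    (hconv : ConvexOn ℝ K f) (hcont : ContinuousOn f K) :
    ∃ g : (Fin n → ℝ) →ₗ[ℝ] ℝ, ∀ x ∈ K, f 0 + g x ≤ f x := by
  set S : Set ((Fin n → ℝ) × ℝ) := {p | p.1 ∈ interior K ∧ f p.1 < p.2} with hS
  have hSconv : Convex ℝ S := by
    rintro ⟨p1, p2⟩ ⟨hp1, hp2⟩ ⟨q1, q2⟩ ⟨hq1, hq2⟩ a b ha hb hab
    refine ⟨hKconv.interior hp1 hq1 ha hb hab, ?_⟩
    have h1 : f (a • p1 + b • q1) ≤ a * f p1 + b * f q1 :=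
      hconv.2 (interior_subset hp1) (interior_subset hq1) ha hb hab
    have h2 : a * f p1 + b * f q1 < a * p2 + b * q2 := by
      rcases eq_or_lt_of_le ha with rfl | ha'
      · have hb1 : b = 1 := by linarith
        simpa [hb1] using hq2
      · have hbq : b * f q1 ≤ b * q2 := mul_le_mul_of_nonneg_left hq2.le hb
        have hap : a * f p1 < a * p2 := mul_lt_mul_of_pos_left hp2 ha'
        linarith
    exact h1.trans_lt h2
  have hSopen : IsOpen S := by
    have hfc : ContinuousOn (fun p : (Fin n → ℝ) × ℝ => p.2 - f p.1)
        ((interior K) ×ˢ (univ : Set ℝ)) := by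
      apply ContinuousOn.sub continuousOn_snd
      exact (hcont.mono interior_subset).comp continuousOn_fst (fun p hp => hp.1)
    have hh : IsOpen (((interior K) ×ˢ (univ : Set ℝ)) ∩
        (fun p : (Fin n → ℝ) × ℝ => p.2 - f p.1) ⁻¹' Ioi (0 : ℝ)) :=
      hfc.isOpen_inter_preimage (isOpen_interior.prod isOpen_univ) isOpen_Ioi
    convert hh using 1
    ext ⟨x, t⟩
    simp only [hS, mem_setOf_eq, mem_inter_iff, mem_preimage, mem_prod, mem_univ, and_true,
      mem_Ioi, sub_pos]
  have hx0 : ((0 : Fin n → ℝ), f 0) ∉ S := fun h => lt_irrefl _ h.2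
  obtain ⟨φ, hφ⟩ := geometric_hahn_banach_open_point hSconv hSopen hx0
  set c : ℝ := φ (0, 1) with hc
  have hdec : ∀ (x : Fin n → ℝ) (t : ℝ), φ (x, t) = φ (x, 0) + t * c := by
    intro x t
    have hxt : ((x, t) : (Fin n → ℝ) × ℝ) = (x, 0) + t • ((0 : Fin n → ℝ), (1 : ℝ)) := by
      simp [Prod.ext_iff]
    rw [hxt, map_add, map_smul, smul_eq_mul, hc]
  have h00 : φ ((0 : Fin n → ℝ), (0 : ℝ)) = 0 := by
    have he : ((0 : Fin n → ℝ), (0 : ℝ)) = (0 : (Fin n → ℝ) × ℝ) := rfl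
    rw [he, map_zero]
  have hcneg : c < 0 := by
    have h1 : ((0 : Fin n → ℝ), f 0 + 1) ∈ S := ⟨h0, by exact lt_add_one _⟩
    have h2 := hφ _ h1
    have hA := hdec 0 (f 0 + 1)
    have hB := hdec 0 (f 0)
    nlinarith [h2, hA, hB, h00]
  have hcpos : (0 : ℝ) < -c := by linarith
  have hcne : (-c : ℝ) ≠ 0 := ne_of_gt hcpos
  have hint : ∀ x ∈ interior K, φ (x, 0) + f x * c ≤ f 0 * c := by
    intro x hx
    have key : ∀ ε > (0 : ℝ), φ (x, 0) + f x * c ≤ f 0 * c + ε := by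
      intro ε hε
      have hδ : (0 : ℝ) < ε / (-c) := div_pos hε hcpos
      have hmem : ((x, f x + ε / (-c)) : (Fin n → ℝ) × ℝ) ∈ S :=
        ⟨hx, by linarith⟩
      have h2 := hφ _ hmem
      have hA := hdec x (f x + ε / (-c))
      have hB := hdec 0 (f 0)
      have hcalc : ε / (-c) * c = -ε := by field_simp; rw [div_self hcneg.ne]
      have hexp : (f x + ε / (-c)) * c = f x * c + ε / (-c) * c := by ring
      linarith [h2, hA, hB, h00, hcalc, hexp]
    linarith [le_of_forall_pos_le_add key]
  refine ⟨(-c)⁻¹ • ((φ : ((Fin n → ℝ) × ℝ) →ₗ[ℝ] ℝ).comp (LinearMap.inl ℝ (Fin n → ℝ) ℝ)), ?_⟩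
  set g : (Fin n → ℝ) →ₗ[ℝ] ℝ :=
    (-c)⁻¹ • ((φ : ((Fin n → ℝ) × ℝ) →ₗ[ℝ] ℝ).comp (LinearMap.inl ℝ (Fin n → ℝ) ℝ)) with hgdef
  have hg : ∀ x, g x = (-c)⁻¹ * φ (x, 0) := fun x => rfl
  have hintK : ∀ x ∈ interior K, f 0 + g x ≤ f x := by
    intro x hx
    have h1 := hint x hx
    have h2 : φ (x, 0) ≤ (f x - f 0) * (-c) := by nlinarith
    have h3 : (-c)⁻¹ * φ (x, 0) ≤ (-c)⁻¹ * ((f x - f 0) * (-c)) :=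
      mul_le_mul_of_nonneg_left h2 (inv_nonneg.mpr hcpos.le)
    have h4 : (-c)⁻¹ * ((f x - f 0) * (-c)) = f x - f 0 := by
      rw [mul_comm (f x - f 0) (-c), inv_mul_cancel_left₀ hcne]
    rw [hg]
    linarith [h3.trans_eq h4]
  intro x hx
  have h0K : (0 : Fin n → ℝ) ∈ K := interior_subset h0
  have hsegint : ∀ θ ∈ Ioo (0 : ℝ) 1, θ • x ∈ interior K := by
    intro θ hθ
    have := hKconv.combo_interior_self_mem_interior h0 hx
      (a := 1 - θ) (b := θ) (by linarith [hθ.2]) hθ.1.le (by ring)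
    simpa using this
  have hseg : ∀ θ ∈ Ioo (0 : ℝ) 1, θ • x ∈ K := fun θ hθ =>
    interior_subset (hsegint θ hθ)
  have hIoo : Ioo (0 : ℝ) 1 ∈ 𝓝[<] (1 : ℝ) :=
    Ioo_mem_nhdsLT_of_mem (by norm_num : (1 : ℝ) ∈ Ioc (0 : ℝ) 1)
  have htend : Tendsto (fun θ : ℝ => θ • x) (𝓝[<] (1 : ℝ)) (𝓝[K] x) := by
    rw [tendsto_nhdsWithin_iff]
    constructor
    · have h1 : Tendsto (fun θ : ℝ => θ • x) (𝓝 1) (𝓝 ((1 : ℝ) • x)) :=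
        ((continuous_id.smul continuous_const).tendsto 1)
      simpa using h1.mono_left nhdsWithin_le_nhds
    · filter_upwards [hIoo] with θ hθ using hseg θ hθ
  have hF : Tendsto (fun θ : ℝ => f (θ • x)) (𝓝[<] (1 : ℝ)) (𝓝 (f x)) :=
    (hcont x hx).tendsto.comp htend
  have hgc : Continuous fun y : Fin n → ℝ => g y := g.continuous_of_finiteDimensional
  have hG : Tendsto (fun θ : ℝ => f 0 + g (θ • x)) (𝓝[<] (1 : ℝ)) (𝓝 (f 0 + g x)) := by
    have hcont2 : Continuous fun θ : ℝ => f 0 + g (θ • x) :=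
      continuous_const.add (hgc.comp (continuous_id.smul continuous_const))
    have h1 := hcont2.tendsto 1
    simpa using h1.mono_left nhdsWithin_le_nhds
  refine le_of_tendsto_of_tendsto hG hF ?_
  filter_upwards [hIoo] with θ hθ using hintK _ (hsegint θ hθ)

theorem stmt_3 {n : ℕ} (K : Set (Fin n → ℝ)) (hKc : IsCompact K) (hKconv : Convex ℝ K)
    (hKint : (interior K).Nonempty) (hsym : ∀ x ∈ K, -x ∈ K)
    (f : (Fin n → ℝ) → ℝ) (hconv : ConvexOn ℝ K f) (hcont : ContinuousOn f K) :
    (∃ L : MvPolynomial (Fin n) ℝ, L.totalDegree ≤ 1 ∧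
      ∀ x ∈ K, |f x - eval x L| ≤ (1 / 2) * smod 2 f K) ∧
    polyErr 1 f K ≤ (1 / 2) * smod 2 f K := by
  classical
  obtain ⟨y, hy⟩ := hKint
  have hyK := interior_subset hy
  have hnegy : -y ∈ K := hsym y hyK
  have h0 : (0 : Fin n → ℝ) ∈ interior K := by
    have := hKconv.combo_interior_self_mem_interior hy hnegy
      (a := 1/2) (b := 1/2) (by norm_num) (by norm_num) (by norm_num)
    simpa [smul_neg] using this
  have h0K : (0 : Fin n → ℝ) ∈ K := interior_subset h0
  obtain ⟨g, hg⟩ := support_aux K hKconv h0 f hconv hcont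
  set A : Set ℝ := {v | ∃ x h : Fin n → ℝ, (∀ j ≤ (2 : ℕ), x + (j : ℝ) • h ∈ K) ∧
    v = |∑ j ∈ Finset.range (2 + 1), (-1 : ℝ) ^ j * ((2 : ℕ).choose j) * f (x + (j : ℝ) • h)|}
    with hA
  have hsmodA : smod 2 f K = sSup A := by
    unfold smod
    rw [hA]
  have hsum3 : ∀ x0 h : Fin n → ℝ,
      ∑ j ∈ Finset.range (2 + 1), (-1 : ℝ) ^ j * ((2 : ℕ).choose j) * f (x0 + (j : ℝ) • h)
        = f x0 - 2 * f (x0 + h) + f (x0 + (2 : ℝ) • h) := by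
    intro x0 h
    rw [Finset.sum_range_succ, Finset.sum_range_succ, Finset.sum_range_succ,
      Finset.sum_range_zero]
    norm_num
    ring
  obtain ⟨B, hB⟩ := hKc.exists_bound_of_continuousOn hcont
  have hbdd : BddAbove A := by
    refine ⟨4 * B, ?_⟩
    rintro v ⟨x, h, hmem, rfl⟩
    have e0 := abs_le.mp (by simpa [Real.norm_eq_abs] using hB _ (hmem 0 (by norm_num)))
    have e1 := abs_le.mp (by simpa [Real.norm_eq_abs] using hB _ (hmem 1 (by norm_num)))
    have e2 := abs_le.mp (by simpa [Real.norm_eq_abs] using hB _ (hmem 2 (by norm_num)))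
    rw [hsum3, abs_le]
    constructor <;> linarith [e0.1, e0.2, e1.1, e1.2, e2.1, e2.2]
  have hs0 : 0 ≤ smod 2 f K := by
    rw [hsmodA]
    apply Real.sSup_nonneg
    rintro v ⟨x, h, _, rfl⟩
    positivity
  have e2x : ∀ x : Fin n → ℝ, -x + (2 : ℝ) • x = x := by
    intro x; rw [two_smul]; abel
  have hkey : ∀ x ∈ K, f x - (f 0 + g x) ≤ smod 2 f K := by
    intro x hx
    have hnx : -x ∈ K := hsym x hx
    have hle1 := hg x hx
    have hle2 := hg (-x) hnx
    rw [map_neg] at hle2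
    have hnn : 0 ≤ f (-x) - 2 * f 0 + f x := by linarith
    have hmemA : f (-x) - 2 * f 0 + f x ∈ A := by
      refine ⟨-x, x, ?_, ?_⟩
      · intro j hj
        interval_cases j
        · simpa using hnx
        · simpa using h0K
        · have heq : -x + ((2 : ℕ) : ℝ) • x = x := by push_cast; exact e2x x
          rw [heq]; exact hx
      · rw [hsum3, neg_add_cancel, e2x, abs_of_nonneg (by linarith)]
    have hle := le_csSup hbdd hmemA
    rw [hsmodA]
    linarith
  set a : Fin n → ℝ := fun i => g (fun j => if i = j then 1 else 0) with ha
  set P : MvPolynomial (Fin n) ℝ :=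
    MvPolynomial.C (f 0 + smod 2 f K / 2) + ∑ i : Fin n, MvPolynomial.C (a i) * X i with hP
  have hPdeg : P.totalDegree ≤ 1 := by
    refine (totalDegree_add _ _).trans (max_le ?_ ?_)
    · exact le_trans (le_of_eq (totalDegree_C _)) (by norm_num)
    · refine (totalDegree_finset_sum _ _).trans ?_
      apply Finset.sup_le
      intro i _
      refine (totalDegree_mul _ _).trans ?_
      simp [totalDegree_C, totalDegree_X]
  have hPeval : ∀ x, eval x P = f 0 + smod 2 f K / 2 + g x := by
    intro x
    have hgx := g.pi_apply_eq_sum_univ x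
    rw [hP]
    simp only [map_add, eval_C, map_sum, eval_mul, eval_X]
    rw [hgx]
    congr 1
    apply Finset.sum_congr rfl
    intro i _
    rw [smul_eq_mul, ha]
    ring
  have hbound : ∀ x ∈ K, |f x - eval x P| ≤ 1 / 2 * smod 2 f K := by
    intro x hx
    rw [hPeval]
    have h1 := hg x hx
    have h2 := hkey x hx
    rw [abs_le]
    constructor <;> linarith
  constructor
  · exact ⟨P, hPdeg, fun x hx => hbound x hx⟩
  · have hE : uDist f (fun x => eval x P) K ≤ 1 / 2 * smod 2 f K := by
      apply Real.sSup_le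
      · rintro v ⟨x, hx, rfl⟩
        exact hbound x hx
      · linarith
    have hbb : BddBelow {e | ∃ Q : MvPolynomial (Fin n) ℝ, Q.totalDegree ≤ 1 ∧
        e = uDist f (fun x => eval x Q) K} := by
      refine ⟨0, ?_⟩
      rintro e ⟨Q, _, rfl⟩
      apply Real.sSup_nonneg
      rintro v ⟨x, _, rfl⟩
      positivity
    have hmemE : uDist f (fun x => eval x P) K ∈ {e | ∃ Q : MvPolynomial (Fin n) ℝ,
        Q.totalDegree ≤ 1 ∧ e = uDist f (fun x => eval x Q) K} := ⟨P, hPdeg, rfl⟩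
    exact (csInf_le hbb hmemE).trans hE
end

section
/- For every ε > 0 there exists a convex continuous function g on [−1,1] such that ω₂(g; [−1,1]) = 1 and the error of best uniform approximation of g by affine functions satisfies E₁(g; [−1,1]) > 1/2 − ε. In particular, one may take g(x) = max{0, (x − 1 + δ)/δ} for δ < 4ε, for which E₁ = 1/2 − δ/4 and ω₂ = 1. -/
noncomputable def uDist1 (f g : ℝ → ℝ) (K : Set ℝ) : ℝ :=
  sSup ((fun x => |f x - g x|) '' K)

/-- Error of best uniform approximation by polynomials of degree ≤ m on K ⊂ ℝ. -/
noncomputable def polyErr1 (m : ℕ) (f : ℝ → ℝ) (K : Set ℝ) : ℝ :=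
  sInf {e | ∃ P : Polynomial ℝ, P.natDegree ≤ m ∧ e = uDist1 f (fun x => P.eval x) K}

/-- m-th modulus of smoothness on K ⊂ ℝ. -/
noncomputable def smod1 (m : ℕ) (f : ℝ → ℝ) (K : Set ℝ) : ℝ :=
  sSup {v | ∃ x h : ℝ, (∀ j ≤ m, x + (j : ℝ) * h ∈ K) ∧
    v = |∑ j ∈ Finset.range (m + 1), (-1 : ℝ) ^ j * (m.choose j) * f (x + (j : ℝ) * h)|}

private lemma gdef_bound (δ a c : ℝ) (hδ : 0 < δ)
    (ha : -1 ≤ a) (hac : a ≤ c) (hc : c ≤ 1) :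
    |max 0 ((a - 1 + δ)/δ) - 2 * max 0 (((a+c)/2 - 1 + δ)/δ) + max 0 ((c - 1 + δ)/δ)| ≤ 1 := by
  set fa := max 0 ((a - 1 + δ)/δ) with hfad
  set fb := max 0 (((a+c)/2 - 1 + δ)/δ) with hfbd
  set fc := max 0 ((c - 1 + δ)/δ) with hfcd
  have hfa0 : 0 ≤ fa := le_max_left _ _
  have hfc0 : 0 ≤ fc := le_max_left _ _
  have hfc1 : fc ≤ 1 := by
    apply max_le (by norm_num)
    rw [div_le_one hδ]; linarith
  have hconv : fb ≤ (fa + fc)/2 := by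
    apply max_le
    · linarith
    · have h1 : (a - 1 + δ)/δ ≤ fa := le_max_right _ _
      have h2 : (c - 1 + δ)/δ ≤ fc := le_max_right _ _
      have he : ((a+c)/2 - 1 + δ)/δ = ((a-1+δ)/δ + (c-1+δ)/δ)/2 := by
        field_simp; ring
      rw [he]; linarith
  have hmono : fa ≤ fb := by
    apply max_le (le_max_left _ _)
    refine le_trans ?_ (le_max_right _ _)
    gcongr
    linarith
  rw [abs_le]; constructor <;> linarith

theorem stmt_4 (ε : ℝ) (hε : 0 < ε) :
    ∃ g : ℝ → ℝ, ConvexOn ℝ (Set.Icc (-1 : ℝ) 1) g ∧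
      ContinuousOn g (Set.Icc (-1 : ℝ) 1) ∧
      smod1 2 g (Set.Icc (-1 : ℝ) 1) = 1 ∧
      polyErr1 1 g (Set.Icc (-1 : ℝ) 1) > 1 / 2 - ε := by
  set δ : ℝ := min 1 (2*ε) with hδdef
  have hδ : 0 < δ := lt_min one_pos (by linarith)
  have hδ1 : δ ≤ 1 := min_le_left _ _
  have hδε : δ ≤ 2*ε := min_le_right _ _
  set g : ℝ → ℝ := fun t => max 0 ((t - 1 + δ)/δ) with hgdef
  -- continuity
  have hgc : Continuous g := continuous_const.max (by fun_prop)
  -- key values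
  have hg1 : g 1 = 1 := by
    simp only [hgdef]
    rw [show (1 - 1 + δ)/δ = 1 by field_simp; ring]
    norm_num
  have hg1δ : g (1 - δ) = 0 := by
    simp only [hgdef]
    rw [show (1 - δ - 1 + δ)/δ = 0 by field_simp; ring]
    norm_num
  have hg12δ : g (1 - 2*δ) = 0 := by
    simp only [hgdef]
    rw [show (1 - 2*δ - 1 + δ)/δ = -1 by field_simp; ring]
    norm_num
  have hgm1 : g (-1) = 0 := by
    simp only [hgdef]
    rw [max_eq_left]
    apply div_nonpos_of_nonpos_of_nonneg (by linarith) hδ.le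
  refine ⟨g, ?_, hgc.continuousOn, ?_, ?_⟩
  · -- convexity
    refine ⟨convex_Icc _ _, fun x _ y _ a b ha hb hab => ?_⟩
    simp only [hgdef, smul_eq_mul]
    apply max_le
    · exact add_nonneg (mul_nonneg ha (le_max_left _ _)) (mul_nonneg hb (le_max_left _ _))
    · have h1 : (x - 1 + δ)/δ ≤ max 0 ((x-1+δ)/δ) := le_max_right _ _
      have h2 : (y - 1 + δ)/δ ≤ max 0 ((y-1+δ)/δ) := le_max_right _ _
      have key : ((a*x + b*y) - 1 + δ)/δ = a * ((x-1+δ)/δ) + b * ((y-1+δ)/δ) := by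
        rw [show (a*x + b*y) - 1 + δ = a*(x-1+δ) + b*(y-1+δ) by
          linear_combination (1 - δ) * hab]
        rw [add_div, mul_div_assoc, mul_div_assoc]
      rw [key]
      have := mul_le_mul_of_nonneg_left h1 ha
      have := mul_le_mul_of_nonneg_left h2 hb
      linarith
  · -- smod1 = 1
    have hub : ∀ v ∈ {v | ∃ x h : ℝ, (∀ j : ℕ, j ≤ 2 → x + (j : ℝ) * h ∈ Set.Icc (-1:ℝ) 1) ∧
        v = |∑ j ∈ Finset.range (2 + 1), (-1 : ℝ) ^ j * ((2:ℕ).choose j) * g (x + (j : ℝ) * h)|},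
        v ≤ 1 := by
      rintro v ⟨x, h, hmem, rfl⟩
      have h0 := hmem 0 (by norm_num)
      have h1 := hmem 1 (by norm_num)
      have h2 := hmem 2 (by norm_num)
      simp only [Nat.cast_ofNat, Nat.cast_one, Nat.cast_zero, Set.mem_Icc] at h0 h1 h2
      have hsum : ∑ j ∈ Finset.range (2 + 1), (-1 : ℝ) ^ j * ((2:ℕ).choose j) * g (x + (j : ℝ) * h)
          = g x - 2 * g (x + h) + g (x + 2*h) := by
        simp [Finset.sum_range_succ]
        ring_nf
      rw [hsum]
      norm_num at h0 h1 h2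
      rcases le_total 0 h with hh | hh
      · have e1 : x + h = (x + (x + 2*h))/2 := by ring
        rw [e1]
        exact gdef_bound δ x (x + 2*h) hδ (by linarith) (by linarith) (by linarith)
      · have e2 : g x - 2 * g (x + h) + g (x + 2*h)
            = g (x + 2*h) - 2 * g ((x + 2*h + x)/2) + g x := by
          rw [show (x + 2*h + x)/2 = x + h by ring]; ring
        rw [e2]
        exact gdef_bound δ (x + 2*h) x hδ (by linarith) (by linarith) (by linarith)
    have hmem1 : (1:ℝ) ∈ {v | ∃ x h : ℝ, (∀ j : ℕ, j ≤ 2 → x + (j : ℝ) * h ∈ Set.Icc (-1:ℝ) 1) ∧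
        v = |∑ j ∈ Finset.range (2 + 1), (-1 : ℝ) ^ j * ((2:ℕ).choose j) * g (x + (j : ℝ) * h)|} := by
      refine ⟨1 - 2*δ, δ, ?_, ?_⟩
      · intro j hj
        interval_cases j <;> rw [Set.mem_Icc] <;> push_cast <;> constructor <;> linarith
      · have hsum : ∑ j ∈ Finset.range (2 + 1), (-1 : ℝ) ^ j * ((2:ℕ).choose j)
            * g (1 - 2*δ + (j : ℝ) * δ)
            = g (1-2*δ) - 2 * g (1-δ) + g 1 := by
          simp [Finset.sum_range_succ]
          ring_nf
        rw [hsum, hg1, hg1δ, hg12δ]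
        norm_num
    unfold smod1
    exact le_antisymm (csSup_le ⟨1, hmem1⟩ hub) (le_csSup ⟨1, hub⟩ hmem1)
  · -- polyErr1 > 1/2 - ε
    have hstep : (1:ℝ)/2 - δ/4 ≤ polyErr1 1 g (Set.Icc (-1:ℝ) 1) := by
      unfold polyErr1
      refine le_csInf ⟨uDist1 g (fun x => (0:Polynomial ℝ).eval x) (Set.Icc (-1:ℝ) 1),
        ⟨0, by simp, rfl⟩⟩ ?_
      rintro e ⟨P, hdeg, rfl⟩
      set M := uDist1 g (fun x => P.eval x) (Set.Icc (-1:ℝ) 1) with hM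
      have hcont : Continuous fun x => |g x - P.eval x| :=
        (hgc.sub (Polynomial.continuous P)).abs
      have hbdd : BddAbove ((fun x => |g x - P.eval x|) '' Set.Icc (-1:ℝ) 1) :=
        (isCompact_Icc.image hcont).bddAbove
      have hP : ∀ x : ℝ, P.eval x = P.coeff 0 + P.coeff 1 * x := by
        intro x
        rw [Polynomial.eval_eq_sum_range' (lt_of_le_of_lt hdeg one_lt_two)]
        rw [show (2:ℕ) = 1+1 from rfl, Finset.sum_range_succ, Finset.sum_range_one]
        ring
      have b1 : |g 1 - P.eval 1| ≤ M :=
        le_csSup hbdd ⟨1, Set.mem_Icc.mpr (by norm_num), rfl⟩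
      have b2 : |g (1-δ) - P.eval (1-δ)| ≤ M :=
        le_csSup hbdd ⟨1-δ, Set.mem_Icc.mpr (by constructor <;> linarith), rfl⟩
      have b3 : |g (-1) - P.eval (-1)| ≤ M :=
        le_csSup hbdd ⟨-1, Set.mem_Icc.mpr (by norm_num), rfl⟩
      rw [hg1, hP 1] at b1
      rw [hg1δ, hP (1-δ)] at b2
      rw [hgm1, hP (-1)] at b3
      rw [abs_le] at b1 b2 b3
      have k1 : (2-δ) * (1 - (P.coeff 0 + P.coeff 1 * 1)) ≤ (2-δ) * M :=
        mul_le_mul_of_nonneg_left b1.2 (by linarith)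
      have k2 : -(2 * (0 - (P.coeff 0 + P.coeff 1 * (1-δ)))) ≤ 2 * M := by nlinarith [b2.1]
      have k3 : δ * (0 - (P.coeff 0 + P.coeff 1 * (-1))) ≤ δ * M :=
        mul_le_mul_of_nonneg_left b3.2 hδ.le
      nlinarith [k1, k2, k3]
    have : δ/4 < ε := by linarith
    unfold polyErr1 at hstep ⊢
    linarith
end

section
/- For any compact convex body K ⊂ ℝⁿ and any continuous f : K → ℝ and ε > 0, there exists a convex continuous function h on K (of the form h = g + L‖x‖² for a polynomial g with ‖f − g‖_K small) such that E_{m−1}(h;K) ≥ (w − 2ε)/(1+ε) whenever E_{m−1}(f;K) ≥ w − ε and ω_m(f;K) = 1, for m ≥ 3. Consequently, the Whitney constant over convex functions equals the unrestricted Whitney constant: 𝑤̆_m(K) = w_m(K) for all m ≥ 3. -/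
open MvPolynomial

/-- Whitney constant `w_m(K)`. -/
noncomputable def whitney {n : ℕ} (m : ℕ) (K : Set (Fin n → ℝ)) : ℝ :=
  sSup {e | ∃ f : (Fin n → ℝ) → ℝ, ContinuousOn f K ∧ smod m f K ≤ 1 ∧
    e = polyErr (m - 1) f K}

/-- Whitney constant for convex functions `w̆_m(K)`. -/
noncomputable def cwhitney {n : ℕ} (m : ℕ) (K : Set (Fin n → ℝ)) : ℝ :=
  sSup {e | ∃ f : (Fin n → ℝ) → ℝ, ConvexOn ℝ K f ∧ ContinuousOn f K ∧ smod m f K ≤ 1 ∧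
    e = polyErr (m - 1) f K}

section Lemmas
variable {n : ℕ} {K : Set (Fin n → ℝ)} {f g : (Fin n → ℝ) → ℝ} {m : ℕ}

lemma uDist_nonneg : 0 ≤ uDist f g K :=
  Real.sSup_nonneg (by rintro v ⟨x, _, rfl⟩; positivity)

lemma uDist_le {a : ℝ} (ha : 0 ≤ a) (h : ∀ x ∈ K, |f x - g x| ≤ a) : uDist f g K ≤ a :=
  Real.sSup_le (by rintro v ⟨x, hx, rfl⟩; exact h x hx) ha

lemma uDist_bddAbove (hKc : IsCompact K) (hf : ContinuousOn f K) (hg : ContinuousOn g K) :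
    BddAbove ((fun x => |f x - g x|) '' K) :=
  hKc.bddAbove_image (hf.sub hg).abs

lemma abs_le_uDist (hb : BddAbove ((fun x => |f x - g x|) '' K)) {x : (Fin n → ℝ)} (hx : x ∈ K) :
    |f x - g x| ≤ uDist f g K :=
  le_csSup hb ⟨x, hx, rfl⟩

lemma uDist_congr (f' g' : (Fin n → ℝ) → ℝ) (h : ∀ x ∈ K, |f x - g x| = |f' x - g' x|) :
    uDist f g K = uDist f' g' K := by
  unfold uDist; congr 1; exact Set.image_congr h

lemma polyErr_nonneg : 0 ≤ polyErr m f K := by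
  apply Real.sInf_nonneg
  rintro e ⟨P, hP, rfl⟩; exact uDist_nonneg

lemma polyErr_le {P : MvPolynomial (Fin n) ℝ} (hP : P.totalDegree ≤ m) :
    polyErr m f K ≤ uDist f (fun x => eval x P) K :=
  csInf_le ⟨0, by rintro e ⟨Q, hQ, rfl⟩; exact uDist_nonneg⟩ ⟨P, hP, rfl⟩

lemma le_polyErr {a : ℝ}
    (h : ∀ P : MvPolynomial (Fin n) ℝ, P.totalDegree ≤ m → a ≤ uDist f (fun x => eval x P) K) :
    a ≤ polyErr m f K :=
  le_csInf ⟨_, ⟨0, by simp, rfl⟩⟩ (by rintro e ⟨P, hP, rfl⟩; exact h P hP)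

end Lemmas

section AltSum

lemma alt0 {m : ℕ} (hm : 1 ≤ m) :
    ∑ j ∈ Finset.range (m + 1), (-1 : ℝ) ^ j * (m.choose j) = 0 := by
  have := Int.alternating_sum_range_choose_of_ne (Nat.one_le_iff_ne_zero.mp hm)
  have h2 : ((∑ j ∈ Finset.range (m + 1), ((-1) ^ j * m.choose j : ℤ) : ℤ) : ℝ) = 0 := by
    rw [this]; norm_num
  push_cast at h2
  convert h2 using 2

lemma alt1 {m : ℕ} (hm : 2 ≤ m) :
    ∑ j ∈ Finset.range (m + 1), (-1 : ℝ) ^ j * (m.choose j) * (j : ℝ) = 0 := by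
  obtain ⟨M, rfl⟩ : ∃ M, m = M + 1 := ⟨m - 1, by omega⟩
  rw [Finset.sum_range_succ']
  have key : ∀ k : ℕ, ((M + 1).choose (k + 1) : ℝ) * ((k : ℝ) + 1) = (M + 1) * (M.choose k) := by
    intro k
    have := Nat.add_one_mul_choose_eq M k
    have h2 : ((M.succ * M.choose k : ℕ) : ℝ) = (((M + 1).choose (k + 1) * (k + 1) : ℕ) : ℝ) := by
      rw [this]
    push_cast at h2
    linarith
  have : ∀ k ∈ Finset.range (M + 1),
      (-1 : ℝ) ^ (k + 1) * ((M + 1).choose (k + 1)) * ((k : ℝ) + 1)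
      = (-(M + 1)) * ((-1 : ℝ) ^ k * (M.choose k)) := by
    intro k _
    rw [pow_succ]
    linear_combination (-(-1:ℝ)^k) * key k
  rw [Finset.sum_congr rfl (by intro k hk; push_cast; exact this k hk)]
  rw [← Finset.mul_sum, alt0 (by omega)]
  simp

lemma alt2 {m : ℕ} (hm : 3 ≤ m) :
    ∑ j ∈ Finset.range (m + 1), (-1 : ℝ) ^ j * (m.choose j) * (j : ℝ) ^ 2 = 0 := by
  obtain ⟨M, rfl⟩ : ∃ M, m = M + 1 := ⟨m - 1, by omega⟩
  rw [Finset.sum_range_succ']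
  have key : ∀ k : ℕ, ((M + 1).choose (k + 1) : ℝ) * ((k : ℝ) + 1) = (M + 1) * (M.choose k) := by
    intro k
    have := Nat.add_one_mul_choose_eq M k
    have h2 : ((M.succ * M.choose k : ℕ) : ℝ) = (((M + 1).choose (k + 1) * (k + 1) : ℕ) : ℝ) := by
      rw [this]
    push_cast at h2
    linarith
  have : ∀ k ∈ Finset.range (M + 1),
      (-1 : ℝ) ^ (k + 1) * ((M + 1).choose (k + 1)) * ((k : ℝ) + 1) ^ 2
      = (-(M + 1)) * ((-1 : ℝ) ^ k * (M.choose k) * (k : ℝ))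
        + (-(M + 1)) * ((-1 : ℝ) ^ k * (M.choose k)) := by
    intro k _
    rw [pow_succ]
    linear_combination (-(-1:ℝ)^k * ((k:ℝ)+1)) * key k
  rw [Finset.sum_congr rfl (by intro k hk; push_cast; exact this k hk)]
  rw [Finset.sum_add_distrib, ← Finset.mul_sum, ← Finset.mul_sum, alt0 (by omega),
    alt1 (by omega)]
  simp

end AltSum

def dset {n : ℕ} (m : ℕ) (f : (Fin n → ℝ) → ℝ) (K : Set (Fin n → ℝ)) : Set ℝ :=
  {v | ∃ x h : Fin n → ℝ, (∀ j ≤ m, x + (j : ℝ) • h ∈ K) ∧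
    v = |∑ j ∈ Finset.range (m + 1), (-1 : ℝ) ^ j * (m.choose j) * f (x + (j : ℝ) • h)|}

lemma smod_eq_sSup_dset {n : ℕ} (m : ℕ) (f : (Fin n → ℝ) → ℝ) (K : Set (Fin n → ℝ)) :
    smod m f K = sSup (dset m f K) := rfl

section SmodLemmas
variable {n : ℕ} {K : Set (Fin n → ℝ)} {f g : (Fin n → ℝ) → ℝ} {m : ℕ}

lemma smod_nonneg : 0 ≤ smod m f K :=
  Real.sSup_nonneg (by rintro v ⟨x, h, _, rfl⟩; positivity)

lemma smod_le {a : ℝ} (ha : 0 ≤ a)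
    (h : ∀ x hh : Fin n → ℝ, (∀ j ≤ m, x + (j : ℝ) • hh ∈ K) →
      |∑ j ∈ Finset.range (m + 1), (-1 : ℝ) ^ j * (m.choose j) * f (x + (j : ℝ) • hh)| ≤ a) :
    smod m f K ≤ a :=
  Real.sSup_le (by rintro v ⟨x, hh, hc, rfl⟩; exact h x hh hc) ha

lemma abs_fdiff_le {M : ℝ} (hM : ∀ x ∈ K, |f x| ≤ M) {x hh : Fin n → ℝ}
    (hc : ∀ j ≤ m, x + (j : ℝ) • hh ∈ K) :
    |∑ j ∈ Finset.range (m + 1), (-1 : ℝ) ^ j * (m.choose j) * f (x + (j : ℝ) • hh)|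
      ≤ 2 ^ m * M := by
  calc |∑ j ∈ Finset.range (m + 1), (-1 : ℝ) ^ j * (m.choose j) * f (x + (j : ℝ) • hh)|
      ≤ ∑ j ∈ Finset.range (m + 1), |(-1 : ℝ) ^ j * (m.choose j) * f (x + (j : ℝ) • hh)| :=
        Finset.abs_sum_le_sum_abs _ _
    _ ≤ ∑ j ∈ Finset.range (m + 1), (m.choose j : ℝ) * M := by
        apply Finset.sum_le_sum
        intro j hj
        rw [abs_mul, abs_mul, abs_pow, abs_neg, abs_one, one_pow, one_mul, Nat.abs_cast]
        exact mul_le_mul_of_nonneg_left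
          (hM _ (hc j (by simpa using Nat.lt_succ_iff.mp (Finset.mem_range.mp hj))))
          (Nat.cast_nonneg _)
    _ = 2 ^ m * M := by
        rw [← Finset.sum_mul]
        congr 1
        rw [← Nat.cast_sum, Nat.sum_range_choose]
        push_cast; ring

lemma dset_bddAbove (hKc : IsCompact K) (hf : ContinuousOn f K) : BddAbove (dset m f K) := by
  obtain ⟨M, hM⟩ := hKc.exists_bound_of_continuousOn hf
  refine ⟨2 ^ m * M, ?_⟩
  rintro v ⟨x, hh, hc, rfl⟩
  exact abs_fdiff_le (fun x hx => by simpa using hM x hx) hc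

lemma le_smod (hb : BddAbove (dset m f K)) {x hh : Fin n → ℝ}
    (hc : ∀ j ≤ m, x + (j : ℝ) • hh ∈ K) :
    |∑ j ∈ Finset.range (m + 1), (-1 : ℝ) ^ j * (m.choose j) * f (x + (j : ℝ) • hh)|
      ≤ smod m f K :=
  le_csSup hb ⟨x, hh, hc, rfl⟩

lemma smod_congr
    (h : ∀ x hh : Fin n → ℝ, (∀ j ≤ m, x + (j : ℝ) • hh ∈ K) →
      ∑ j ∈ Finset.range (m + 1), (-1 : ℝ) ^ j * (m.choose j) * f (x + (j : ℝ) • hh)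
      = ∑ j ∈ Finset.range (m + 1), (-1 : ℝ) ^ j * (m.choose j) * g (x + (j : ℝ) • hh)) :
    smod m f K = smod m g K := by
  unfold smod; congr 1; ext v
  constructor <;> rintro ⟨x, hh, hc, rfl⟩
  · exact ⟨x, hh, hc, by rw [h x hh hc]⟩
  · exact ⟨x, hh, hc, by rw [h x hh hc]⟩

lemma smod_smul_le {c : ℝ} (hc : 0 ≤ c) (hb : BddAbove (dset m f K)) :
    smod m (fun x => c * f x) K ≤ c * smod m f K := by
  apply smod_le (mul_nonneg hc smod_nonneg)
  intro x hh hcond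
  have : ∑ j ∈ Finset.range (m + 1), (-1 : ℝ) ^ j * (m.choose j) * (c * f (x + (j : ℝ) • hh))
      = c * ∑ j ∈ Finset.range (m + 1), (-1 : ℝ) ^ j * (m.choose j) * f (x + (j : ℝ) • hh) := by
    rw [Finset.mul_sum]; exact Finset.sum_congr rfl fun j _ => by ring
  rw [this, abs_mul, abs_of_nonneg hc]
  exact mul_le_mul_of_nonneg_left (le_smod hb hcond) hc

lemma smod_close {δ : ℝ} (hδ : 0 ≤ δ) (hb : BddAbove (dset m f K))
    (hfg : ∀ x ∈ K, |g x - f x| ≤ δ) :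
    smod m g K ≤ smod m f K + 2 ^ m * δ := by
  apply smod_le (add_nonneg smod_nonneg (by positivity))
  intro x hh hcond
  have split : ∑ j ∈ Finset.range (m + 1), (-1 : ℝ) ^ j * (m.choose j) * g (x + (j : ℝ) • hh)
      = (∑ j ∈ Finset.range (m + 1), (-1 : ℝ) ^ j * (m.choose j) * f (x + (j : ℝ) • hh))
      + ∑ j ∈ Finset.range (m + 1), (-1 : ℝ) ^ j * (m.choose j)
          * ((fun y => g y - f y) (x + (j : ℝ) • hh)) := by
    rw [← Finset.sum_add_distrib]; exact Finset.sum_congr rfl fun j _ => by simp; ring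
  rw [split]
  refine (abs_add_le _ _).trans ?_
  gcongr
  · exact le_smod hb hcond
  · exact abs_fdiff_le hfg hcond

end SmodLemmas

lemma exists_poly_approx {n : ℕ} {K : Set (Fin n → ℝ)} (hKc : IsCompact K)
    {f : (Fin n → ℝ) → ℝ} (hf : ContinuousOn f K) {δ : ℝ} (hδ : 0 < δ) :
    ∃ P : MvPolynomial (Fin n) ℝ, ∀ x ∈ K, |f x - eval x P| ≤ δ := by
  haveI : CompactSpace K := isCompact_iff_compactSpace.mp hKc
  set coord : Fin n → C(K, ℝ) := fun i =>
    ⟨fun x => (x : Fin n → ℝ) i, (continuous_apply i).comp continuous_subtype_val⟩ with hcoord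
  set φ : MvPolynomial (Fin n) ℝ →ₐ[ℝ] C(K, ℝ) := MvPolynomial.aeval coord with hφ
  have keyeval : ∀ (P : MvPolynomial (Fin n) ℝ) (x : K), (φ P) x = eval (x : Fin n → ℝ) P := by
    intro P x
    have h1 : (ContinuousMap.evalAlgHom (S := ℝ) (R := ℝ) x).comp φ
        = MvPolynomial.aeval (fun i => (x : Fin n → ℝ) i) := by
      rw [hφ, MvPolynomial.comp_aeval]
      rfl
    have h2 := congrArg (fun ψ => ψ P) h1
    simp only [AlgHom.comp_apply] at h2
    have h3 : (MvPolynomial.aeval (R := ℝ) (fun i => (x : Fin n → ℝ) i)) P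
        = eval (x : Fin n → ℝ) P := by
      rw [← MvPolynomial.coe_aeval_eq_eval]
      rfl
    rw [← h3]
    exact h2
  have sep : (φ.range : Subalgebra ℝ C(K, ℝ)).SeparatesPoints := by
    intro x y hxy
    have : (x : Fin n → ℝ) ≠ (y : Fin n → ℝ) := fun h => hxy (Subtype.ext h)
    obtain ⟨i, hi⟩ : ∃ i, (x : Fin n → ℝ) i ≠ (y : Fin n → ℝ) i := by
      by_contra hcon
      push_neg at hcon
      exact this (funext hcon)
    refine ⟨_, ⟨φ (X i), ⟨X i, rfl⟩, rfl⟩, ?_⟩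
    have ex := keyeval (X i) x
    have ey := keyeval (X i) y
    simp only [eval_X] at ex ey
    show (φ (X i)) x ≠ (φ (X i)) y
    rw [ex, ey]
    exact hi
  obtain ⟨g, hg⟩ := ContinuousMap.exists_mem_subalgebra_near_continuous_of_separatesPoints
    φ.range sep (fun x : K => f x) (hf.restrict) δ hδ
  obtain ⟨P, hP⟩ := g.2
  refine ⟨P, fun x hx => ?_⟩
  have h2 : (g : C(K, ℝ)) ⟨x, hx⟩ = eval x P := by
    rw [← keyeval P ⟨x, hx⟩]
    exact congrArg (fun F : C(K, ℝ) => F ⟨x, hx⟩) hP.symm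
  have h1 := hg ⟨x, hx⟩
  rw [h2] at h1
  rw [abs_sub_comm]
  calc |eval x P - f x| = ‖eval x P - f x‖ := (Real.norm_eq_abs _).symm
    _ ≤ δ := le_of_lt h1

namespace WhitneyAux

variable {n : ℕ}

/-- substitution of the affine line `x + t d` into `P`, as a univariate polynomial in `t`. -/
noncomputable def uline (P : MvPolynomial (Fin n) ℝ) (x d : Fin n → ℝ) : Polynomial ℝ :=
  MvPolynomial.aeval (fun i => Polynomial.C (x i) + Polynomial.C (d i) * Polynomial.X) P

lemma eval_uline (P : MvPolynomial (Fin n) ℝ) (x d : Fin n → ℝ) (t : ℝ) :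
    Polynomial.eval t (uline P x d) = eval (x + t • d) P := by
  have h1 : (Polynomial.aeval t : Polynomial ℝ →ₐ[ℝ] ℝ).comp
      (MvPolynomial.aeval (fun i => Polynomial.C (x i) + Polynomial.C (d i) * Polynomial.X))
      = MvPolynomial.aeval (fun i => x i + t * d i) := by
    rw [MvPolynomial.comp_aeval]
    congr 1
    funext i
    simp only [map_add, map_mul, Polynomial.aeval_C, Polynomial.aeval_X,
      Algebra.algebraMap_self, RingHom.id_apply]
    ring
  have h2 := congrArg (fun ψ => ψ P) h1
  simp only [AlgHom.comp_apply] at h2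
  have h3 : Polynomial.aeval t (uline P x d) = Polynomial.eval t (uline P x d) := by
    rw [Polynomial.aeval_def]
    rw [Algebra.algebraMap_self]; rfl
  have h4 : (MvPolynomial.aeval (R := ℝ) (fun i => x i + t * d i)) P
      = eval (x + t • d) P := by
    rw [← MvPolynomial.coe_aeval_eq_eval]
    rfl
  rw [← h3, ← h4]
  exact h2

lemma uline_shift (P : MvPolynomial (Fin n) ℝ) (x d : Fin n → ℝ) (t : ℝ) :
    (uline P x d).comp (Polynomial.X + Polynomial.C t) = uline P (x + t • d) d := by
  unfold uline
  rw [Polynomial.comp_eq_aeval]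
  have h1 : (Polynomial.aeval (Polynomial.X + Polynomial.C t) :
       Polynomial ℝ →ₐ[ℝ] Polynomial ℝ).comp
      (MvPolynomial.aeval (fun i => Polynomial.C (x i) + Polynomial.C (d i) * Polynomial.X))
      = MvPolynomial.aeval
          (fun i => Polynomial.C ((x + t • d) i) + Polynomial.C (d i) * Polynomial.X) := by
    rw [MvPolynomial.comp_aeval]
    congr 1
    funext i
    simp only [map_add, map_mul, Polynomial.aeval_C, Polynomial.aeval_X,
      Pi.add_apply, Pi.smul_apply, smul_eq_mul, Polynomial.algebraMap_eq]
    ring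
  exact congrArg (fun ψ => ψ P) h1

lemma uline_smul (P : MvPolynomial (Fin n) ℝ) (x d : Fin n → ℝ) (c : ℝ) :
    uline P x (c • d) = (uline P x d).comp (Polynomial.C c * Polynomial.X) := by
  unfold uline
  rw [Polynomial.comp_eq_aeval]
  have h1 : (Polynomial.aeval (Polynomial.C c * Polynomial.X) :
       Polynomial ℝ →ₐ[ℝ] Polynomial ℝ).comp
      (MvPolynomial.aeval (fun i => Polynomial.C (x i) + Polynomial.C (d i) * Polynomial.X))
      = MvPolynomial.aeval
          (fun i => Polynomial.C (x i) + Polynomial.C ((c • d) i) * Polynomial.X) := by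
    rw [MvPolynomial.comp_aeval]
    congr 1
    funext i
    simp only [map_add, map_mul, Polynomial.aeval_C, Polynomial.aeval_X,
      Pi.smul_apply, smul_eq_mul, Polynomial.algebraMap_eq]
    ring
  exact (congrArg (fun ψ => ψ P) h1).symm

/-- second derivative along a line, at parameter `0`. -/
noncomputable def c2 (P : MvPolynomial (Fin n) ℝ) (x d : Fin n → ℝ) : ℝ :=
  Polynomial.eval 0 ((uline P x d).derivative.derivative)

lemma eval_dd (P : MvPolynomial (Fin n) ℝ) (x d : Fin n → ℝ) (t : ℝ) :
    Polynomial.eval t ((uline P x d).derivative.derivative) = c2 P (x + t • d) d := by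
  rw [c2, ← uline_shift P x d t]
  rw [Polynomial.derivative_comp]
  rw [Polynomial.derivative_add, Polynomial.derivative_X, Polynomial.derivative_C, add_zero,
    one_mul]
  rw [Polynomial.derivative_comp]
  rw [Polynomial.derivative_add, Polynomial.derivative_X, Polynomial.derivative_C, add_zero,
    one_mul]
  rw [Polynomial.eval_comp]
  simp

lemma c2_smul (P : MvPolynomial (Fin n) ℝ) (x d : Fin n → ℝ) (c : ℝ) :
    c2 P x (c • d) = c ^ 2 * c2 P x d := by
  rw [c2, uline_smul]
  rw [Polynomial.derivative_comp, Polynomial.derivative_C_mul_X]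
  rw [Polynomial.derivative_mul, Polynomial.derivative_C, zero_mul, zero_add]
  rw [Polynomial.derivative_comp, Polynomial.derivative_C_mul_X]
  rw [Polynomial.eval_mul, Polynomial.eval_mul, Polynomial.eval_C, Polynomial.eval_comp]
  simp [c2]
  ring

noncomputable def bigD2 (P : MvPolynomial (Fin n) ℝ) : MvPolynomial (Fin n ⊕ Fin n) ℝ :=
  ((MvPolynomial.aeval (fun i => Polynomial.C (X (Sum.inl i) : MvPolynomial (Fin n ⊕ Fin n) ℝ)
      + Polynomial.C (X (Sum.inr i)) * Polynomial.X) P).derivative.derivative).coeff 0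

lemma c2_eq_bigD2 (P : MvPolynomial (Fin n) ℝ) (x d : Fin n → ℝ) :
    c2 P x d = eval (Sum.elim x d) (bigD2 P) := by
  set ev : MvPolynomial (Fin n ⊕ Fin n) ℝ →ₐ[ℝ] ℝ := MvPolynomial.aeval (Sum.elim x d) with hev
  set Φ : Polynomial (MvPolynomial (Fin n ⊕ Fin n) ℝ) →ₐ[ℝ] Polynomial ℝ :=
    Polynomial.mapAlgHom ev with hΦ
  have key : Φ.comp (MvPolynomial.aeval
      (fun i => Polynomial.C (X (Sum.inl i) : MvPolynomial (Fin n ⊕ Fin n) ℝ)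
        + Polynomial.C (X (Sum.inr i)) * Polynomial.X))
      = MvPolynomial.aeval
          (fun i => Polynomial.C (x i) + Polynomial.C (d i) * Polynomial.X) := by
    rw [MvPolynomial.comp_aeval]
    congr 1
    funext i
    simp only [hΦ, Polynomial.mapAlgHom, AlgHom.coe_mk, RingHom.coe_coe,
      Polynomial.coe_mapRingHom]
    rw [Polynomial.map_add, Polynomial.map_mul, Polynomial.map_C, Polynomial.map_C,
      Polynomial.map_X]
    simp [hev]
  have key2 : Φ (MvPolynomial.aeval
      (fun i => Polynomial.C (X (Sum.inl i) : MvPolynomial (Fin n ⊕ Fin n) ℝ)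
        + Polynomial.C (X (Sum.inr i)) * Polynomial.X) P) = uline P x d := by
    have := congrArg (fun ψ => ψ P) key
    simpa [uline] using this
  have hder : ∀ q : Polynomial (MvPolynomial (Fin n ⊕ Fin n) ℝ),
      (Φ q).derivative = Φ q.derivative := by
    intro q
    simp only [hΦ, Polynomial.mapAlgHom, AlgHom.coe_mk, RingHom.coe_coe,
      Polynomial.coe_mapRingHom]
    exact Polynomial.derivative_map q _
  have hc : ∀ q : Polynomial (MvPolynomial (Fin n ⊕ Fin n) ℝ),
      Polynomial.eval 0 (Φ q) = ev (q.coeff 0) := by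
    intro q
    rw [← Polynomial.coeff_zero_eq_eval_zero]
    simp only [hΦ, Polynomial.mapAlgHom, AlgHom.coe_mk, RingHom.coe_coe,
      Polynomial.coe_mapRingHom, Polynomial.coeff_map]
    rfl
  rw [c2, ← key2, hder, hder, hc, bigD2]
  rw [hev, ← MvPolynomial.coe_aeval_eq_eval]
  rfl

lemma c2_continuous (P : MvPolynomial (Fin n) ℝ) :
    Continuous (fun p : (Fin n → ℝ) × (Fin n → ℝ) => c2 P p.1 p.2) := by
  have h1 : Continuous (fun p : (Fin n → ℝ) × (Fin n → ℝ) => Sum.elim p.1 p.2) := by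
    apply continuous_pi
    intro i
    cases i with
    | inl i => exact (continuous_apply i).comp continuous_fst
    | inr i => exact (continuous_apply i).comp continuous_snd
  have := (MvPolynomial.continuous_eval (p := bigD2 P)).comp h1
  convert this using 1
  funext p
  exact c2_eq_bigD2 P p.1 p.2


lemma dd_sq (α β : ℝ) :
    (((Polynomial.C α + Polynomial.C β * Polynomial.X) ^ 2).derivative.derivative)
      = Polynomial.C (2 * β ^ 2) := by
  rw [sq]
  simp [Polynomial.derivative_mul]
  ring_nf
  rw [show Polynomial.C (2:ℝ) = 2 from map_ofNat _ 2]

lemma exists_convex_quad {K : Set (Fin n → ℝ)} (hKc : IsCompact K) (hKconv : Convex ℝ K)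
    (P : MvPolynomial (Fin n) ℝ) :
    ∃ L : ℝ, 0 ≤ L ∧ ConvexOn ℝ K (fun x => eval x P + L * ∑ i, (x i) ^ 2) := by
  obtain ⟨M0, hM0⟩ := (hKc.prod (isCompact_closedBall (0 : Fin n → ℝ) 1)).exists_bound_of_continuousOn
    (c2_continuous P).continuousOn
  set M : ℝ := max M0 0 with hM
  have hMnn : 0 ≤ M := le_max_right _ _
  have hbound : ∀ x ∈ K, ∀ d : Fin n → ℝ, -(M * ∑ i, d i ^ 2) ≤ c2 P x d := by
    intro x hx d
    by_cases hd : (∑ i, d i ^ 2) = 0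
    · have hd0 : d = 0 := by
        funext i
        have h1 : ∀ j ∈ Finset.univ, (0:ℝ) ≤ d j ^ 2 := fun j _ => sq_nonneg _
        have := (Finset.sum_eq_zero_iff_of_nonneg h1).mp hd i (Finset.mem_univ i)
        exact pow_eq_zero_iff (by norm_num) |>.mp this
      have hc2 : c2 P x d = 0 := by
        have := c2_smul P x 0 0
        rw [smul_zero] at this
        rw [hd0]
        simpa using this
      rw [hc2, hd]
      simp
    · have hpos : 0 < ∑ i, d i ^ 2 :=
        lt_of_le_of_ne (Finset.sum_nonneg fun j _ => sq_nonneg _) (Ne.symm hd)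
      set r : ℝ := Real.sqrt (∑ i, d i ^ 2) with hr
      have hrpos : 0 < r := Real.sqrt_pos.mpr hpos
      set e : Fin n → ℝ := r⁻¹ • d with he
      have hde : d = r • e := by
        rw [he, smul_smul, mul_inv_cancel₀ hrpos.ne', one_smul]
      have hnorme : ‖e‖ ≤ 1 := by
        rw [pi_norm_le_iff_of_nonneg (by norm_num : (0:ℝ) ≤ 1)]
        intro i
        rw [he]
        simp only [Pi.smul_apply, smul_eq_mul, Real.norm_eq_abs, abs_mul,
          abs_inv, abs_of_pos hrpos]
        rw [inv_mul_le_iff₀ hrpos, mul_one]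
        rw [hr]
        rw [Real.le_sqrt (abs_nonneg _) hpos.le]
        calc |d i| ^ 2 = d i ^ 2 := sq_abs _
          _ ≤ ∑ j, d j ^ 2 := Finset.single_le_sum (fun j _ => sq_nonneg (d j)) (Finset.mem_univ i)
      have hMe : |c2 P x e| ≤ M := by
        have hmem : ((x, e) : (Fin n → ℝ) × (Fin n → ℝ)) ∈ K ×ˢ Metric.closedBall 0 1 := by
          refine ⟨hx, ?_⟩
          rw [Metric.mem_closedBall, dist_zero_right]
          exact hnorme
        have := hM0 (x, e) hmem
        rw [Real.norm_eq_abs] at this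
        exact this.trans (le_max_left _ _)
      have hc2d : c2 P x d = r ^ 2 * c2 P x e := by rw [hde, c2_smul]
      have hr2 : r ^ 2 = ∑ i, d i ^ 2 := Real.sq_sqrt hpos.le
      rw [hc2d, ← hr2]
      have h2 := mul_le_mul_of_nonneg_left (neg_le_of_abs_le hMe) (sq_nonneg r)
      linarith [h2]
  refine ⟨M / 2, by positivity, hKconv, ?_⟩
  intro a ha b hb wa wb hwa hwb hsum
  set d : Fin n → ℝ := b - a with hdd
  set pfull : Polynomial ℝ := uline P a d
    + Polynomial.C (M / 2) * ∑ i, (Polynomial.C (a i) + Polynomial.C (d i) * Polynomial.X) ^ 2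
    with hpfull
  have hψ : ∀ t : ℝ, Polynomial.eval t pfull
      = eval (a + t • d) P + (M / 2) * ∑ i, ((a + t • d) i) ^ 2 := by
    intro t
    rw [hpfull, Polynomial.eval_add, Polynomial.eval_mul, Polynomial.eval_C, eval_uline]
    congr 1
    congr 1
    rw [Polynomial.eval_finset_sum]
    apply Finset.sum_congr rfl
    intro i _
    simp only [Polynomial.eval_pow, Polynomial.eval_add, Polynomial.eval_mul,
      Polynomial.eval_C, Polynomial.eval_X, Pi.add_apply, Pi.smul_apply, smul_eq_mul]
    ring
  have hdd2 : ∀ t : ℝ, Polynomial.eval t pfull.derivative.derivative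
      = c2 P (a + t • d) d + (M / 2) * (2 * ∑ i, d i ^ 2) := by
    intro t
    have hS : (Polynomial.derivative (Polynomial.derivative
        (∑ i, (Polynomial.C (a i) + Polynomial.C (d i) * Polynomial.X) ^ 2)))
        = ∑ i : Fin n, Polynomial.C (2 * d i ^ 2) := by
      rw [Polynomial.derivative_sum]
      rw [Polynomial.derivative_sum]
      exact Finset.sum_congr rfl fun i _ => dd_sq _ _
    rw [hpfull, Polynomial.derivative_add, Polynomial.derivative_C_mul,
      Polynomial.derivative_add, Polynomial.derivative_C_mul, hS]
    rw [Polynomial.eval_add, Polynomial.eval_mul, Polynomial.eval_C, eval_dd]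
    congr 1
    rw [Polynomial.eval_finset_sum]
    have : ∑ i : Fin n, Polynomial.eval t (Polynomial.C (2 * d i ^ 2))
        = ∑ i : Fin n, 2 * d i ^ 2 :=
      Finset.sum_congr rfl fun i _ => Polynomial.eval_C
    rw [this, ← Finset.mul_sum]
  have hconv1 : ConvexOn ℝ (Set.Icc (0:ℝ) 1) (fun t => Polynomial.eval t pfull) := by
    apply convexOn_of_deriv2_nonneg (convex_Icc 0 1)
    · exact (Polynomial.continuous pfull).continuousOn
    · exact (Polynomial.differentiable pfull).differentiableOn
    · have hder1 : deriv (fun t => Polynomial.eval t pfull)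
          = fun t => Polynomial.eval t pfull.derivative := funext fun s => Polynomial.deriv (p := pfull)
      rw [hder1]
      exact (Polynomial.differentiable _).differentiableOn
    · intro t ht
      have hital : deriv^[2] (fun t => Polynomial.eval t pfull) t
          = Polynomial.eval t pfull.derivative.derivative := by
        have hder1 : deriv (fun t => Polynomial.eval t pfull)
            = fun t => Polynomial.eval t pfull.derivative := funext fun s => Polynomial.deriv (p := pfull)
        show deriv (deriv (fun t => Polynomial.eval t pfull)) t = _
        rw [hder1]
        exact Polynomial.deriv (p := pfull.derivative)
      rw [hital, hdd2]
      rw [interior_Icc] at ht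
      have heq : a + t • d = (1 - t) • a + t • b := by
        rw [hdd]; funext i
        simp only [Pi.add_apply, Pi.smul_apply, Pi.sub_apply, smul_eq_mul]
        ring
      have hyK : a + t • d ∈ K := by
        rw [heq]
        exact hKconv ha hb (by linarith [ht.2]) ht.1.le (by ring)
      have h1 := hbound _ hyK d
      nlinarith [h1]
  have h0m : (0:ℝ) ∈ Set.Icc (0:ℝ) 1 := by norm_num
  have h1m : (1:ℝ) ∈ Set.Icc (0:ℝ) 1 := by norm_num
  have hcc := hconv1.2 h0m h1m hwa hwb hsum
  simp only [smul_eq_mul, mul_zero, mul_one, zero_add] at hcc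
  rw [hψ, hψ, hψ] at hcc
  have e0 : a + (0:ℝ) • d = a := by simp
  have e1 : a + (1:ℝ) • d = b := by
    rw [hdd]; funext i
    simp only [Pi.add_apply, Pi.smul_apply, Pi.sub_apply, one_smul, smul_eq_mul]
    ring
  have eb : a + wb • d = wa • a + wb • b := by
    rw [hdd]; funext i
    have hwa1 : wa = 1 - wb := by linarith
    simp only [Pi.add_apply, Pi.smul_apply, Pi.sub_apply, smul_eq_mul, hwa1]
    ring
  rw [e0, e1, eb] at hcc
  simpa using hcc



end WhitneyAux


section Main
variable {n : ℕ} {K : Set (Fin n → ℝ)}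

lemma quad_fdiff_zero {m : ℕ} (hm : 3 ≤ m) (L : ℝ) (x hh : Fin n → ℝ) :
    ∑ j ∈ Finset.range (m + 1), (-1:ℝ)^j * (m.choose j) * (L * ∑ i, ((x + (j:ℝ) • hh) i)^2)
      = 0 := by
  have expand : ∀ j : ℕ, (L * ∑ i, ((x + (j:ℝ) • hh) i)^2)
      = L * (∑ i, x i^2) + (2*L*∑ i, x i * hh i) * (j:ℝ) + (L*∑ i, hh i ^2) * (j:ℝ)^2 := by
    intro j
    have h1 : ∑ i, ((x + (j:ℝ) • hh) i)^2
        = ∑ i, (x i^2 + 2*(j:ℝ)*(x i * hh i) + (j:ℝ)^2 * hh i^2) := by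
      apply Finset.sum_congr rfl
      intro i _
      simp only [Pi.add_apply, Pi.smul_apply, smul_eq_mul]
      ring
    rw [h1, Finset.sum_add_distrib, Finset.sum_add_distrib, ← Finset.mul_sum, ← Finset.mul_sum]
    ring
  calc ∑ j ∈ Finset.range (m+1), (-1:ℝ)^j * (m.choose j) * (L * ∑ i, ((x + (j:ℝ)•hh) i)^2)
      = ∑ j ∈ Finset.range (m+1), ((L*∑ i, x i^2) * ((-1:ℝ)^j * (m.choose j))
        + ((2*L*∑ i, x i*hh i) * ((-1:ℝ)^j * (m.choose j) * (j:ℝ))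
        + (L*∑ i, hh i^2) * ((-1:ℝ)^j * (m.choose j) * (j:ℝ)^2))) := by
        apply Finset.sum_congr rfl
        intro j _
        rw [expand j]
        ring
    _ = 0 := by
        rw [Finset.sum_add_distrib, Finset.sum_add_distrib, ← Finset.mul_sum, ← Finset.mul_sum,
          ← Finset.mul_sum, alt0 (by omega), alt1 (by omega), alt2 hm]
        ring

lemma key_approx (hKc : IsCompact K) (hKconv : Convex ℝ K)
    {m : ℕ} (hm : 3 ≤ m) {f : (Fin n → ℝ) → ℝ} (hf : ContinuousOn f K)
    (hsm : smod m f K ≤ 1) {δ : ℝ} (hδ : 0 < δ) :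
    ∃ g : (Fin n → ℝ) → ℝ, ConvexOn ℝ K g ∧ ContinuousOn g K ∧ smod m g K ≤ 1 ∧
      polyErr (m-1) f K ≤ (1 + 2^m * δ) * polyErr (m-1) g K + δ := by
  obtain ⟨P, hP⟩ := exists_poly_approx hKc hf hδ
  obtain ⟨L, hL, hLconv⟩ := WhitneyAux.exists_convex_quad hKc hKconv P
  set Qp : MvPolynomial (Fin n) ℝ :=
    MvPolynomial.C L * ∑ i, (X i : MvPolynomial (Fin n) ℝ)^2 with hQp
  have hQdeg : Qp.totalDegree ≤ 2 := by
    rw [hQp]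
    refine le_trans (MvPolynomial.totalDegree_mul _ _) ?_
    rw [MvPolynomial.totalDegree_C]
    simp only [zero_add]
    refine le_trans (MvPolynomial.totalDegree_finset_sum _ _) ?_
    apply Finset.sup_le
    intro i _
    rw [MvPolynomial.totalDegree_X_pow]
  have hQeval : ∀ x : Fin n → ℝ, eval x Qp = L * ∑ i, (x i)^2 := by
    intro x
    rw [hQp]
    simp
  set hfun : (Fin n → ℝ) → ℝ := fun x => eval x P + L * ∑ i, (x i)^2 with hhfun
  have hfun_eq : hfun = fun x => eval x (P + Qp) := by
    funext x
    rw [map_add, hQeval, hhfun]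
  have hconth : ContinuousOn hfun K := by
    rw [hfun_eq]
    exact (MvPolynomial.continuous_eval (p := P + Qp)).continuousOn
  set c : ℝ := (1 + 2^m * δ)⁻¹ with hc
  have hden : (0:ℝ) < 1 + 2^m * δ := by positivity
  have hcpos : 0 < c := inv_pos.mpr hden
  refine ⟨fun x => c * hfun x, ?_, ?_, ?_, ?_⟩
  · have h2 : (fun x => c * hfun x) = c • hfun := by
      funext x
      simp [Pi.smul_apply, smul_eq_mul]
    rw [h2]
    exact hLconv.smul hcpos.le
  · exact continuousOn_const.mul hconth
  · have h1 : smod m hfun K = smod m (fun x => eval x P) K := by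
      apply smod_congr
      intro x hh hcnd
      have hterm : ∀ j ∈ Finset.range (m+1),
          (-1:ℝ)^j * (m.choose j) * hfun (x + (j:ℝ)•hh)
          = (-1:ℝ)^j * (m.choose j) * eval (x + (j:ℝ)•hh) P
            + (-1:ℝ)^j * (m.choose j) * (L * ∑ i, ((x + (j:ℝ)•hh) i)^2) := by
        intro j _
        rw [hhfun]
        ring
      rw [Finset.sum_congr rfl hterm, Finset.sum_add_distrib, quad_fdiff_zero hm L x hh,
        add_zero]
    have h2 : smod m (fun x => eval x P) K ≤ smod m f K + 2^m * δ := by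
      apply smod_close hδ.le (dset_bddAbove hKc hf)
      intro x hx
      rw [abs_sub_comm]
      exact hP x hx
    have h3 : smod m (fun x => c * hfun x) K ≤ c * smod m hfun K :=
      smod_smul_le hcpos.le (dset_bddAbove hKc hconth)
    calc smod m (fun x => c * hfun x) K ≤ c * smod m hfun K := h3
      _ = c * smod m (fun x => eval x P) K := by rw [h1]
      _ ≤ c * (1 + 2^m * δ) := by
          apply mul_le_mul_of_nonneg_left _ hcpos.le
          exact h2.trans (by linarith)
      _ = 1 := inv_mul_cancel₀ hden.ne'
  · have key1 : polyErr (m-1) f K - δ ≤ polyErr (m-1) hfun K := by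
      apply le_polyErr
      intro R hR
      set R' : MvPolynomial (Fin n) ℝ := R + (-1:ℝ) • Qp with hR'
      have hR'deg : R'.totalDegree ≤ m - 1 := by
        rw [hR']
        refine le_trans (MvPolynomial.totalDegree_add _ _) ?_
        apply max_le hR
        refine le_trans (MvPolynomial.totalDegree_smul_le _ _) ?_
        exact hQdeg.trans (by omega)
      have e1 : uDist hfun (fun x => eval x R) K
          = uDist (fun x => eval x P) (fun x => eval x R') K := by
        apply uDist_congr
        intro x hx
        rw [hR']
        simp only [map_add, MvPolynomial.smul_eval, neg_one_mul]
        have hfx : hfun x = eval x P + eval x Qp := by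
          rw [hQeval, hhfun]
        rw [hfx]
        congr 1
        ring
      have hbb : BddAbove ((fun x => |eval x P - eval x R'|) '' K) :=
        uDist_bddAbove hKc (MvPolynomial.continuous_eval (p := P)).continuousOn
          (MvPolynomial.continuous_eval (p := R')).continuousOn
      have e2 : uDist f (fun x => eval x R') K
          ≤ uDist (fun x => eval x P) (fun x => eval x R') K + δ := by
        apply uDist_le (add_nonneg uDist_nonneg hδ.le)
        intro x hx
        calc |f x - eval x R'| ≤ |f x - eval x P| + |eval x P - eval x R'| :=
              abs_sub_le _ _ _
          _ ≤ δ + uDist (fun x => eval x P) (fun x => eval x R') K :=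
              add_le_add (hP x hx) (abs_le_uDist hbb hx)
          _ = uDist (fun x => eval x P) (fun x => eval x R') K + δ := by ring
      have e3 : polyErr (m-1) f K ≤ uDist f (fun x => eval x R') K := polyErr_le hR'deg
      rw [e1]
      linarith
    have key2 : c * polyErr (m-1) hfun K ≤ polyErr (m-1) (fun x => c * hfun x) K := by
      apply le_polyErr
      intro R hR
      set R' : MvPolynomial (Fin n) ℝ := c⁻¹ • R with hR'
      have hR'deg : R'.totalDegree ≤ m - 1 :=
        le_trans (MvPolynomial.totalDegree_smul_le _ _) hR
      have hcontg : ContinuousOn (fun x => c * hfun x) K := continuousOn_const.mul hconth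
      have hb' : BddAbove ((fun x => |(fun x => c * hfun x) x - eval x R|) '' K) :=
        uDist_bddAbove hKc hcontg (MvPolynomial.continuous_eval (p := R)).continuousOn
      have hpoint : ∀ x ∈ K, |hfun x - eval x R'| = c⁻¹ * |c * hfun x - eval x R| := by
        intro x hx
        rw [hR', MvPolynomial.smul_eval]
        have heq : hfun x - c⁻¹ * eval x R = c⁻¹ * (c * hfun x - eval x R) := by
          field_simp
        rw [heq, abs_mul, abs_of_pos (inv_pos.mpr hcpos)]
      have h4 : uDist hfun (fun x => eval x R') K
          ≤ c⁻¹ * uDist (fun x => c * hfun x) (fun x => eval x R) K := by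
        apply uDist_le (mul_nonneg (inv_pos.mpr hcpos).le uDist_nonneg)
        intro x hx
        rw [hpoint x hx]
        exact mul_le_mul_of_nonneg_left (abs_le_uDist hb' hx) (inv_pos.mpr hcpos).le
      have h5 : polyErr (m-1) hfun K
          ≤ c⁻¹ * uDist (fun x => c * hfun x) (fun x => eval x R) K :=
        (polyErr_le hR'deg).trans h4
      calc c * polyErr (m-1) hfun K
          ≤ c * (c⁻¹ * uDist (fun x => c * hfun x) (fun x => eval x R) K) :=
            mul_le_mul_of_nonneg_left h5 hcpos.le
        _ = uDist (fun x => c * hfun x) (fun x => eval x R) K := by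
            field_simp
    have hcomb : c * (polyErr (m-1) f K - δ) ≤ polyErr (m-1) (fun x => c * hfun x) K :=
      le_trans (mul_le_mul_of_nonneg_left key1 hcpos.le) key2
    have hfinal := mul_le_mul_of_nonneg_left hcomb hden.le
    rw [← mul_assoc, mul_inv_cancel₀ hden.ne', one_mul] at hfinal
    linarith

end Main

theorem stmt_6 {n : ℕ} (K : Set (Fin n → ℝ)) (hKc : IsCompact K) (hKconv : Convex ℝ K)
    (hKint : (interior K).Nonempty) (m : ℕ) (hm : 3 ≤ m) :
    cwhitney m K = whitney m K := by
  set S := {e | ∃ f : (Fin n → ℝ) → ℝ, ConvexOn ℝ K f ∧ ContinuousOn f K ∧ smod m f K ≤ 1 ∧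
    e = polyErr (m - 1) f K} with hS
  set T := {e | ∃ f : (Fin n → ℝ) → ℝ, ContinuousOn f K ∧ smod m f K ≤ 1 ∧
    e = polyErr (m - 1) f K} with hT
  have hST : S ⊆ T := by
    rintro e ⟨f, hconv, hcont, hsm, rfl⟩
    exact ⟨f, hcont, hsm, rfl⟩
  have hSmem : polyErr (m-1) (fun _ => (0:ℝ)) K ∈ S :=
    ⟨fun _ => 0, convexOn_const 0 hKconv, continuousOn_const,
      smod_le zero_le_one (by intro x hh hc; simp), rfl⟩
  have key : ∀ e ∈ T, ∀ δ : ℝ, 0 < δ → ∃ s ∈ S, e ≤ (1 + 2^m*δ) * s + δ := by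
    rintro e ⟨f, hcont, hsm, rfl⟩ δ hδ
    obtain ⟨g, h1, h2, h3, h4⟩ := key_approx hKc hKconv hm hcont hsm hδ
    exact ⟨polyErr (m-1) g K, ⟨g, h1, h2, h3, rfl⟩, h4⟩
  have hcw : cwhitney m K = sSup S := rfl
  have hw : whitney m K = sSup T := rfl
  rw [hcw, hw]
  by_cases hbT : BddAbove T
  · have hbS : BddAbove S := hbT.mono hST
    have hSne : S.Nonempty := ⟨_, hSmem⟩
    have hTne : T.Nonempty := ⟨_, hST hSmem⟩
    have hSnn : 0 ≤ sSup S := le_trans polyErr_nonneg (le_csSup hbS hSmem)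
    apply le_antisymm
    · exact csSup_le_csSup hbT hSne hST
    · apply csSup_le hTne
      intro e heT
      by_contra hlt
      push_neg at hlt
      set ε := e - sSup S with hε
      have hεpos : 0 < ε := by simp only [hε]; linarith
      have h2m : (0:ℝ) < 2^m := pow_pos (by norm_num) m
      have hpos1 : 0 < 2^m * sSup S + 1 := by nlinarith
      set δ := ε / (2 * (2^m * sSup S + 1)) with hδdef
      have hδpos : 0 < δ := div_pos hεpos (by linarith)
      obtain ⟨s, hsS, hse⟩ := key e heT δ hδpos
      have hs_le : s ≤ sSup S := le_csSup hbS hsS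
      have hs0 : 0 ≤ s := by
        obtain ⟨g, _, _, _, rfl⟩ := hsS
        exact polyErr_nonneg
      have hmul := mul_le_mul_of_nonneg_left hs_le
        (by positivity : (0:ℝ) ≤ 1 + 2^m*δ)
      have c1 : e ≤ sSup S + δ * (2^m * sSup S + 1) := by nlinarith
      have c2 : δ * (2^m * sSup S + 1) = ε/2 := by
        rw [hδdef]
        field_simp
      rw [c2] at c1
      simp only [hε] at c1
      linarith
  · have hbS : ¬ BddAbove S := by
      intro hbS
      apply hbT
      obtain ⟨B, hB⟩ := hbS
      refine ⟨(1 + 2^m*1) * max B 0 + 1, ?_⟩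
      intro e heT
      obtain ⟨s, hsS, hse⟩ := key e heT 1 one_pos
      have hsB : s ≤ max B 0 := le_trans (hB hsS) (le_max_left _ _)
      have h2m : (0:ℝ) < 1 + 2^m * 1 := by positivity
      calc e ≤ (1+2^m*1)*s + 1 := hse
        _ ≤ (1+2^m*1)*max B 0 + 1 := by nlinarith
    rw [Real.sSup_of_not_bddAbove hbS, Real.sSup_of_not_bddAbove hbT]
end

section
/- Let K ⊂ ℝⁿ be a convex body with B₂ⁿ ⊂ K ⊂ λB₂ⁿ for some λ ≥ 1. Let f : K → ℝ be convex and continuous and P any quadratic polynomial (total degree ≤ 2). Then there exists a convex quadratic polynomial Q such that max_{x∈K}|f(x) − Q(x)| ≤ 2λ²·max_{x∈K}|f(x) − P(x)|. -/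
open MvPolynomial Pointwise

noncomputable def eNorm {n : ℕ} (x : Fin n → ℝ) : ℝ :=
  Real.sqrt (∑ i, x i ^ 2)

noncomputable def unitBall (n : ℕ) : Set (Fin n → ℝ) := {x | eNorm x ≤ 1}

noncomputable def qform {n : ℕ} (R : MvPolynomial (Fin n) ℝ) (v : Fin n → ℝ) : ℝ :=
  (eval v R + eval (-v) R) / 2 - eval 0 R

def Good {n : ℕ} (R : MvPolynomial (Fin n) ℝ) : Prop :=
  (∀ (a b : Fin n → ℝ) (t : ℝ),
     eval (t • a + (1 - t) • b) R
       = t * eval a R + (1 - t) * eval b R - t * (1 - t) * qform R (a - b))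
  ∧ ∀ (c : ℝ) (v : Fin n → ℝ), qform R (c • v) = c ^ 2 * qform R v

lemma qform_add {n : ℕ} (R S : MvPolynomial (Fin n) ℝ) (v : Fin n → ℝ) :
    qform (R + S) v = qform R v + qform S v := by
  simp only [qform, map_add]; ring

lemma good_zero {n : ℕ} : Good (0 : MvPolynomial (Fin n) ℝ) := by
  constructor <;> intros <;> simp [qform]

lemma good_add {n : ℕ} {R S : MvPolynomial (Fin n) ℝ} (hR : Good R) (hS : Good S) :
    Good (R + S) := by
  refine ⟨fun a b t => ?_, fun c v => ?_⟩
  · simp only [map_add, qform_add, hR.1 a b t, hS.1 a b t]; ring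
  · simp only [qform_add, hR.2 c v, hS.2 c v]; ring

lemma apply_le_sum {n : ℕ} (g : Fin n →₀ ℕ) (i : Fin n) : g i ≤ g.sum fun _ e => e := by
  by_cases h : i ∈ g.support
  · exact Finset.single_le_sum (f := fun j => g j) (fun _ _ => Nat.zero_le _) h
  · simp [Finsupp.notMem_support_iff.mp h]

lemma classify {n : ℕ} (m : Fin n →₀ ℕ) :
    (m.sum fun _ e => e) ≤ 2 →
    m = 0 ∨ (∃ i, m = Finsupp.single i 1) ∨ (∃ i, m = Finsupp.single i 2) ∨
      ∃ i j, i ≠ j ∧ m = Finsupp.single i 1 + Finsupp.single j 1 := by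
  induction m using Finsupp.induction with
  | zero => exact fun _ => Or.inl rfl
  | single_add i b g hig hb IH =>
    intro hm
    rw [Finsupp.sum_add_index' (fun _ => rfl) (fun _ _ _ => rfl),
      Finsupp.sum_single_index rfl] at hm
    have hb1 : 1 ≤ b := Nat.one_le_iff_ne_zero.mpr hb
    have hgs : (g.sum fun _ e => e) ≤ 2 := by omega
    rcases IH hgs with rfl | ⟨j, rfl⟩ | ⟨j, rfl⟩ | ⟨j, k, hjk, rfl⟩
    · rw [Finsupp.sum_zero_index] at hm
      have hb2 : b ≤ 2 := by omega
      interval_cases b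
      · exact Or.inr (Or.inl ⟨i, by simp⟩)
      · exact Or.inr (Or.inr (Or.inl ⟨i, by simp⟩))
    · rw [Finsupp.sum_single_index rfl] at hm
      have : b = 1 := by omega
      subst this
      have hij : i ≠ j := by
        intro h
        apply hig
        rw [h, Finsupp.support_single_ne_zero j one_ne_zero]
        exact Finset.mem_singleton_self j
      exact Or.inr (Or.inr (Or.inr ⟨i, j, hij, rfl⟩))
    · rw [Finsupp.sum_single_index rfl] at hm
      omega
    · rw [Finsupp.sum_add_index' (fun _ => rfl) (fun _ _ _ => rfl),
        Finsupp.sum_single_index rfl, Finsupp.sum_single_index rfl] at hm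
      omega

lemma eval_monomial_single {n : ℕ} (c : ℝ) (i : Fin n) (k : ℕ) (x : Fin n → ℝ) :
    eval x (monomial (Finsupp.single i k) c) = c * x i ^ k := by
  rw [eval_monomial, Finsupp.prod_single_index]
  exact pow_zero _

lemma eval_monomial_pair {n : ℕ} (c : ℝ) {i j : Fin n} (x : Fin n → ℝ) :
    eval x (monomial (Finsupp.single i 1 + Finsupp.single j 1) c) = c * (x i * x j) := by
  rw [eval_monomial, Finsupp.prod_add_index (by simp) (by intros; rw [pow_add])]
  rw [Finsupp.prod_single_index (h := fun n e => x n ^ e) (pow_zero _),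
    Finsupp.prod_single_index (h := fun n e => x n ^ e) (pow_zero _), pow_one, pow_one]

lemma good_monomial {n : ℕ} {m : Fin n →₀ ℕ} (c : ℝ) (h : (m.sum fun _ e => e) ≤ 2) :
    Good (monomial m c) := by
  rcases classify m h with rfl | ⟨i, rfl⟩ | ⟨i, rfl⟩ | ⟨i, j, hij, rfl⟩
  · exact ⟨fun a b t => by simp [qform, eval_monomial]; ring,
      fun cc v => by simp [qform, eval_monomial]⟩
  · refine ⟨fun a b t => ?_, fun cc v => ?_⟩ <;>
      · simp only [qform, eval_monomial_single, pow_one, Pi.add_apply, Pi.smul_apply,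
          smul_eq_mul, Pi.sub_apply, Pi.neg_apply, Pi.zero_apply]
        ring
  · refine ⟨fun a b t => ?_, fun cc v => ?_⟩ <;>
      · simp only [qform, eval_monomial_single, Pi.add_apply, Pi.smul_apply,
          smul_eq_mul, Pi.sub_apply, Pi.neg_apply, Pi.zero_apply]
        ring
  · refine ⟨fun a b t => ?_, fun cc v => ?_⟩ <;>
      · simp only [qform, eval_monomial_pair, Pi.add_apply, Pi.smul_apply,
          smul_eq_mul, Pi.sub_apply, Pi.neg_apply, Pi.zero_apply]
        ring

lemma good_of_deg {n : ℕ} (R : MvPolynomial (Fin n) ℝ) (hR : R.totalDegree ≤ 2) :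
    Good R := by
  rw [as_sum R]
  exact Finset.sum_induction _ Good (fun _ _ ha hb => good_add ha hb) good_zero
    (fun m hm => good_monomial _ ((le_totalDegree hm).trans hR))

theorem stmt_12 {n : ℕ} (K : Set (Fin n → ℝ)) (hKc : IsCompact K) (hKconv : Convex ℝ K)
    (lam : ℝ) (hlam : 1 ≤ lam)
    (hball : unitBall n ⊆ K) (hK : K ⊆ lam • unitBall n)
    (f : (Fin n → ℝ) → ℝ) (hconv : ConvexOn ℝ K f) (hcont : ContinuousOn f K)
    (P : MvPolynomial (Fin n) ℝ) (hP : P.totalDegree ≤ 2) :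
    ∃ Q : MvPolynomial (Fin n) ℝ, Q.totalDegree ≤ 2 ∧
      ConvexOn ℝ K (fun x => eval x Q) ∧
      sSup ((fun x => |f x - eval x Q|) '' K) ≤
        2 * lam ^ 2 * sSup ((fun x => |f x - eval x P|) '' K) := by
  set M := sSup ((fun x => |f x - eval x P|) '' K) with hMdef
  -- norm facts
  have hmemK : ∀ v : Fin n → ℝ, (∑ i, v i ^ 2) ≤ 1 → v ∈ K := by
    intro v hv
    apply hball
    simp only [unitBall, Set.mem_setOf_eq, eNorm]
    calc Real.sqrt (∑ i, v i ^ 2) ≤ Real.sqrt 1 := Real.sqrt_le_sqrt hv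
      _ = 1 := Real.sqrt_one
  have h0K : (0 : Fin n → ℝ) ∈ K := hmemK 0 (by simp)
  have hKne : K.Nonempty := ⟨0, h0K⟩
  have hcontP : ContinuousOn (fun x => |f x - eval x P|) K :=
    (hcont.sub (MvPolynomial.continuous_eval P).continuousOn).abs
  have hbdd : BddAbove ((fun x => |f x - eval x P|) '' K) :=
    (hKc.image_of_continuousOn hcontP).bddAbove
  have hMle : ∀ x ∈ K, |f x - eval x P| ≤ M := fun x hx => le_csSup hbdd ⟨x, hx, rfl⟩
  have hM0 : 0 ≤ M := le_trans (abs_nonneg _) (hMle 0 h0K)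
  have hGP := good_of_deg P hP
  -- quadratic form lower bound on the unit ball
  have key : ∀ u : Fin n → ℝ, (∑ i, u i ^ 2) ≤ 1 → -(2 * M) ≤ qform P u := by
    intro u hu
    have huK : u ∈ K := hmemK u hu
    have hnegK : -u ∈ K := hmemK (-u) (by simpa using hu)
    have hzero : (1/2 : ℝ) • u + (1/2 : ℝ) • (-u) = 0 := by
      funext i; simp
    have hmid : f 0 ≤ (1/2 : ℝ) * f u + (1/2 : ℝ) * f (-u) := by
      have := hconv.2 huK hnegK (by norm_num : (0:ℝ) ≤ 1/2) (by norm_num : (0:ℝ) ≤ 1/2)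
        (by norm_num)
      rw [hzero] at this
      simpa using this
    have h1 := hMle u huK
    have h2 := hMle (-u) hnegK
    have h3 := hMle 0 h0K
    rw [abs_le] at h1 h2 h3
    simp only [qform]
    have := h1.1; have := h2.1; have := h3.2
    linarith
  -- general quadratic form lower bound
  have hq0 : qform P 0 = 0 := by
    have := hGP.2 0 0
    simpa using this
  have hqP : ∀ v : Fin n → ℝ, -(2 * M) * (∑ i, v i ^ 2) ≤ qform P v := by
    intro v
    by_cases hv : v = 0
    · subst hv; simp [hq0]
    · have hpos : 0 < ∑ i, v i ^ 2 := by
        have hne : ∃ i, v i ≠ 0 := by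
          by_contra h
          push_neg at h
          exact hv (funext h)
        obtain ⟨i, hi⟩ := hne
        exact Finset.sum_pos' (fun j _ => sq_nonneg _) ⟨i, Finset.mem_univ i, by positivity⟩
      set r := Real.sqrt (∑ i, v i ^ 2) with hr
      have hrpos : 0 < r := Real.sqrt_pos.mpr hpos
      have hr2 : r ^ 2 = ∑ i, v i ^ 2 := Real.sq_sqrt hpos.le
      have hsum_u : (∑ i, (r⁻¹ • v) i ^ 2) ≤ 1 := by
        have : ∑ i, (r⁻¹ • v) i ^ 2 = r⁻¹ ^ 2 * ∑ i, v i ^ 2 := by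
          simp only [Pi.smul_apply, smul_eq_mul, mul_pow, Finset.mul_sum]
        rw [this, ← hr2]
        field_simp
        exact le_rfl
      have hkey := key (r⁻¹ • v) hsum_u
      have hhom := hGP.2 r (r⁻¹ • v)
      rw [smul_inv_smul₀ hrpos.ne' v] at hhom
      rw [hhom, ← hr2]
      nlinarith [sq_nonneg r]
  -- the polynomial Q
  set S : MvPolynomial (Fin n) ℝ := ∑ i, X i ^ 2 with hSdef
  set Q : MvPolynomial (Fin n) ℝ := P + C (2 * M) * S + C (-(lam ^ 2 * M)) with hQdef
  have hevalS : ∀ x : Fin n → ℝ, eval x S = ∑ i, x i ^ 2 := by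
    intro x; simp [hSdef]
  have hevalQ : ∀ x : Fin n → ℝ, eval x Q = eval x P + 2 * M * (∑ i, x i ^ 2) - lam ^ 2 * M := by
    intro x
    simp only [hQdef, map_add, map_mul, eval_C, hevalS]
    ring
  have hdegS : S.totalDegree ≤ 2 := by
    refine (totalDegree_finset_sum _ _).trans ?_
    refine Finset.sup_le fun i _ => ?_
    calc (X i ^ 2).totalDegree ≤ 2 * (X (R := ℝ) i).totalDegree := totalDegree_pow _ _
      _ = 2 := by rw [totalDegree_X]
  have hdegQ : Q.totalDegree ≤ 2 := by
    refine (totalDegree_add _ _).trans ?_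
    refine max_le ((totalDegree_add _ _).trans (max_le hP ?_)) (by rw [totalDegree_C]; exact Nat.zero_le 2)
    refine (totalDegree_mul _ _).trans ?_
    simp only [totalDegree_C, zero_add]
    exact hdegS
  have hGQ := good_of_deg Q hdegQ
  -- qform of Q
  have hqQform : ∀ v : Fin n → ℝ, qform Q v = qform P v + 2 * M * (∑ i, v i ^ 2) := by
    intro v
    simp only [qform, hevalQ]
    have hneg : (∑ i, (-v) i ^ 2) = ∑ i, v i ^ 2 := by
      refine Finset.sum_congr rfl fun i _ => ?_
      simp
    have hz : (∑ i, (0 : Fin n → ℝ) i ^ 2) = 0 := by simp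
    rw [hneg, hz]
    ring
  have hqQ : ∀ v : Fin n → ℝ, 0 ≤ qform Q v := by
    intro v
    rw [hqQform]
    have := hqP v
    linarith
  refine ⟨Q, hdegQ, ⟨hKconv, ?_⟩, ?_⟩
  · intro x hx y hy s t hs ht hst
    have hts : t = 1 - s := by linarith
    subst hts
    show eval (s • x + (1 - s) • y) Q ≤ s • eval x Q + (1 - s) • eval y Q
    rw [hGQ.1 x y s]
    have h1 : 0 ≤ s * (1 - s) * qform Q (x - y) :=
      mul_nonneg (mul_nonneg hs ht) (hqQ _)
    simp only [smul_eq_mul]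
    linarith
  · -- sup bound
    have hx2 : ∀ x ∈ K, (∑ i, x i ^ 2) ≤ lam ^ 2 := by
      intro x hx
      obtain ⟨y, hy, rfl⟩ := hK hx
      have hy1 : ∑ i, y i ^ 2 ≤ 1 := by
        have hyn : eNorm y ≤ 1 := hy
        have h0 : (0:ℝ) ≤ ∑ i, y i ^ 2 := by positivity
        have := Real.sq_sqrt h0
        have hnn := Real.sqrt_nonneg (∑ i, y i ^ 2)
        simp only [eNorm] at hyn
        nlinarith
      have : ∑ i, (lam • y) i ^ 2 = lam ^ 2 * ∑ i, y i ^ 2 := by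
        simp only [Pi.smul_apply, smul_eq_mul, mul_pow, Finset.mul_sum]
      rw [this]
      nlinarith
    refine csSup_le (hKne.image _) ?_
    rintro z ⟨x, hx, rfl⟩
    have h1 := hMle x hx
    rw [abs_le] at h1
    have h2 := hx2 x hx
    have hs0 : (0:ℝ) ≤ ∑ i, x i ^ 2 := by positivity
    have hlam2 : (1:ℝ) ≤ lam ^ 2 := by nlinarith
    have hMs : M * (∑ i, x i ^ 2) ≤ M * lam ^ 2 := mul_le_mul_of_nonneg_left h2 hM0
    have hMs0 : 0 ≤ M * (∑ i, x i ^ 2) := mul_nonneg hM0 hs0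
    have hMlam : M ≤ lam ^ 2 * M := by nlinarith
    show |f x - eval x Q| ≤ 2 * lam ^ 2 * M
    rw [hevalQ x, abs_le]
    constructor <;> nlinarith [h1.1, h1.2]
end

section
/- Define f(x,y) := 2·max{1−y, |x|} on K = [−1,1]×[0,1]. Then f is convex on K, and the polynomial P(x,y) := 3/2 + x² − y² satisfies |f(x,y) − P(x,y)| ≤ 1/2 for all (x,y) ∈ K, with equality |f − P| = 1/2 attained at all six points of {−1,0,1}×{0,1}. -/
theorem stmt_16 (f P : ℝ × ℝ → ℝ)
    (hf : f = fun p => 2 * max (1 - p.2) |p.1|)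
    (hP : P = fun p => 3 / 2 + p.1 ^ 2 - p.2 ^ 2)
    (K : Set (ℝ × ℝ)) (hK : K = Set.Icc (-1 : ℝ) 1 ×ˢ Set.Icc (0 : ℝ) 1) :
    ConvexOn ℝ K f ∧
    (∀ p ∈ K, |f p - P p| ≤ 1 / 2) ∧
    (∀ p ∈ ({-1, 0, 1} : Set ℝ) ×ˢ ({0, 1} : Set ℝ), |f p - P p| = 1 / 2) := by
  have hconvK : Convex ℝ K := by
    rw [hK]; exact (convex_Icc _ _).prod (convex_Icc _ _)
  refine ⟨?_, ?_, ?_⟩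
  · -- convexity
    have hg : ConvexOn ℝ K (fun p : ℝ × ℝ => 2 - 2 * p.2) := by
      refine ⟨hconvK, fun x hx y hy a b ha hb hab => ?_⟩
      have h2 : (a • x + b • y).2 = a * x.2 + b * y.2 := rfl
      simp only [h2, smul_eq_mul]
      nlinarith
    have hh : ConvexOn ℝ K (fun p : ℝ × ℝ => 2 * |p.1|) := by
      refine ⟨hconvK, fun x hx y hy a b ha hb hab => ?_⟩
      have h1 : (a • x + b • y).1 = a * x.1 + b * y.1 := rfl
      have := abs_add_le (a * x.1) (b * y.1)
      rw [abs_mul, abs_mul, abs_of_nonneg ha, abs_of_nonneg hb] at this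
      simp only [h1, smul_eq_mul]
      nlinarith
    have := hg.sup hh
    convert this using 1
    case e'_8 => rfl
    case e'_10 => rfl
    funext p
    simp only [hf, Pi.sup_apply]
    rcases le_total (1 - p.2) |p.1| with h | h
    · rw [max_eq_right h, max_eq_right (by nlinarith [abs_nonneg p.1] : 2 - 2 * p.2 ≤ 2 * |p.1|)]
    · rw [max_eq_left h, max_eq_left (by nlinarith [abs_nonneg p.1] : 2 * |p.1| ≤ 2 - 2 * p.2)]
      ring
  · rintro ⟨x, y⟩ hp
    rw [hK, Set.mem_prod, Set.mem_Icc, Set.mem_Icc] at hp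
    obtain ⟨⟨hx1, hx2⟩, hy1, hy2⟩ := hp
    simp only [hf, hP]
    have hax : |x| ≤ 1 := abs_le.mpr ⟨hx1, hx2⟩
    have hax0 : 0 ≤ |x| := abs_nonneg x
    have hsq : |x| ^ 2 = x ^ 2 := sq_abs x
    rcases max_cases (1 - y) |x| with ⟨hm, hle⟩ | ⟨hm, hlt⟩ <;> rw [hm] <;>
      rw [abs_le] <;> constructor <;> nlinarith
  · rintro ⟨x, y⟩ ⟨hx, hy⟩
    simp only [Set.mem_insert_iff, Set.mem_singleton_iff] at hx hy
    rcases hx with rfl | rfl | rfl <;> rcases hy with rfl | rfl <;>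
      simp [hf, hP, abs_of_nonneg, abs_of_nonpos] <;> norm_num [abs_of_nonneg]
end

section
/- Define f(x,y) := 2·max{1−y, |x|} on K = [−1,1]×[0,1]. Then Q(x,y) := 3/2 + x² + y² − 2y is convex on ℝ², and |f(x,y) − Q(x,y)| ≤ 1/2 for all (x,y) ∈ K, with |f − Q| = 1/2 at every point of {−1,0,1}×{0,1}. -/
theorem stmt_18 (f Q : ℝ × ℝ → ℝ)
    (hf : f = fun p => 2 * max (1 - p.2) |p.1|)
    (hQ : Q = fun p => 3 / 2 + p.1 ^ 2 + p.2 ^ 2 - 2 * p.2)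
    (K : Set (ℝ × ℝ)) (hK : K = Set.Icc (-1 : ℝ) 1 ×ˢ Set.Icc (0 : ℝ) 1) :
    ConvexOn ℝ Set.univ Q ∧
    (∀ p ∈ K, |f p - Q p| ≤ 1 / 2) ∧
    (∀ p ∈ ({-1, 0, 1} : Set ℝ) ×ˢ ({0, 1} : Set ℝ), |f p - Q p| = 1 / 2) := by
  subst hf hQ hK
  refine ⟨?_, ?_, ?_⟩
  · have h : ((fun p : ℝ × ℝ => 3 / 2 + p.1 ^ 2 + p.2 ^ 2 - 2 * p.2)) =
        fun p : ℝ × ℝ => (3 / 2 : ℝ) + (p.1 ^ 2 + ((p.2 - 1) ^ 2 - 1)) := by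
      funext p; ring
    rw [h]
    refine (convexOn_const _ convex_univ).add ?_
    have h1 : ConvexOn ℝ (Set.univ : Set (ℝ × ℝ)) fun p => p.1 ^ 2 := by
      have := (Even.convexOn_pow (even_two : Even 2)).comp_affineMap
        (LinearMap.fst ℝ ℝ ℝ).toAffineMap
      simpa [Function.comp_def] using this
    have h2 : ConvexOn ℝ (Set.univ : Set (ℝ × ℝ)) fun p => (p.2 - 1) ^ 2 - 1 := by
      have := ((Even.convexOn_pow (even_two : Even 2)).comp_affineMap
        ((LinearMap.snd ℝ ℝ ℝ).toAffineMap + AffineMap.const ℝ (ℝ × ℝ) (-1 : ℝ)))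
      have := this.sub (concaveOn_const (1 : ℝ) convex_univ)
      have e : ((fun x : ℝ => x ^ 2) ∘ ⇑((LinearMap.snd ℝ ℝ ℝ).toAffineMap +
          AffineMap.const ℝ (ℝ × ℝ) (-1 : ℝ)) - fun _ => (1 : ℝ)) =
          fun p : ℝ × ℝ => (p.2 - 1) ^ 2 - 1 := by
        funext p
        simp only [Pi.sub_apply, Function.comp_apply, AffineMap.coe_add, Pi.add_apply,
          LinearMap.coe_toAffineMap, LinearMap.snd_apply, AffineMap.const_apply]
        ring
      rw [e, Set.preimage_univ] at this
      exact this
    exact h1.add h2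
  · rintro ⟨x, y⟩ ⟨⟨hx1, hx2⟩, ⟨hy1, hy2⟩⟩
    simp only
    have hax : |x| ≤ 1 := abs_le.2 ⟨hx1, hx2⟩
    have hax0 : 0 ≤ |x| := abs_nonneg x
    have hsq : |x| ^ 2 = x ^ 2 := sq_abs x
    rw [abs_le]
    rcases le_total (1 - y) |x| with h | h
    · rw [max_eq_right h]
      constructor <;> nlinarith
    · rw [max_eq_left h]
      constructor <;> nlinarith
  · rintro ⟨x, y⟩ ⟨hx, hy⟩
    simp only [Set.mem_insert_iff, Set.mem_singleton_iff] at hx hy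
    rcases hx with rfl | rfl | rfl <;> rcases hy with rfl | rfl <;>
      norm_num [abs_of_nonneg, abs_of_nonpos]
end
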